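/- arXiv:1208.5119 — 12 statements merged into one kernel-verified Lean document; each statement's English description precedes it below -/
import Mathlib

section
/- Let f(x) = a x^2 + b x + c with integer coefficients and D = b^2 - 4ac, and let k be a positive integer with B_k = lcm_{1 ≤ i ≤ k} { i·(a^2 i^2 - D) } nonzero. Then for any positive integer n and any integers 0 ≤ i < j ≤ k, gcd(f(n+i), f(n+j)) divides B_k. -/
/-! Put `f x = a x² + b x + c`. Since `f (x + d) - f x = d (2ax + ad + b)` and
`(2ax + b)² = 4a f x + b² - 4ac`, eliminating `x` gives the identity
`d (a²d² - D) = 4ad · f x + (ad - 2ax - b) · (f (x + d) - f x)`.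
Hence a common divisor of `f (n + i)` and `f (n + j)` divides `d (a²d² - D)` for `d = j - i`,
one of the terms of the lcm `B_k`. -/

theorem mul_sq_sub_discrim_eq {R : Type*} [CommRing R] (a b c x d : R) :
    d * (a ^ 2 * d ^ 2 - discrim a b c) =
      4 * a * d * (a * x ^ 2 + b * x + c) +
        (a * d - 2 * a * x - b) *
          ((a * (x + d) ^ 2 + b * (x + d) + c) - (a * x ^ 2 + b * x + c)) := by
  rw [discrim]
  ring

theorem dvd_mul_sq_sub_discrim_of_dvd_quadratic {R : Type*} [CommRing R] {a b c x d g : R}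
    (hx : g ∣ a * x ^ 2 + b * x + c) (hxd : g ∣ a * (x + d) ^ 2 + b * (x + d) + c) :
    g ∣ d * (a ^ 2 * d ^ 2 - discrim a b c) := by
  rw [mul_sq_sub_discrim_eq a b c x d]
  exact (hx.mul_left _).add ((hxd.sub hx).mul_left _)

theorem gcd_dvd_Bk_general (a b c : ℤ) (k : ℕ)
    (n : ℤ) (i j : ℕ) (hij : i < j) (hj : j ≤ k) :
    (Int.gcd (a*(n+i)^2 + b*(n+i) + c) (a*(n+j)^2 + b*(n+j) + c) : ℤ) ∣
      (Finset.Icc 1 k).lcm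
        (fun i : ℕ => (i : ℤ) * (a^2 * (i : ℤ)^2 - (b^2 - 4*a*c))) := by
  have hd : j - i ∈ Finset.Icc 1 k := Finset.mem_Icc.mpr ⟨by omega, by omega⟩
  have hj_eq : (n + j : ℤ) = n + i + ((j - i : ℕ) : ℤ) := by
    rw [Nat.cast_sub hij.le]
    ring
  refine (dvd_mul_sq_sub_discrim_of_dvd_quadratic (x := n + i) (Int.gcd_dvd_left _ _) ?_).trans
    (Finset.dvd_lcm hd)
  rw [← hj_eq]
  exact Int.gcd_dvd_right _ _

/-- For `f(x) = ax² + bx + c`, `D = b² - 4ac` and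
`B_k = lcm_{1 ≤ i ≤ k} { i(a²i² - D) }` nonzero, for any positive `n` and
`0 ≤ i < j ≤ k`, `gcd(f(n+i), f(n+j))` divides `B_k`. -/
theorem gcd_dvd_Bk (a b c : ℤ) (k : ℕ) (hk : 1 ≤ k)
    (hB : (Finset.Icc 1 k).lcm
        (fun i : ℕ => (i : ℤ) * (a^2 * (i : ℤ)^2 - (b^2 - 4*a*c))) ≠ 0)
    (n : ℤ) (hn : 1 ≤ n) (i j : ℕ) (hij : i < j) (hj : j ≤ k) :
    (Int.gcd (a*(n+i)^2 + b*(n+i) + c) (a*(n+j)^2 + b*(n+j) + c) : ℤ) ∣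
      (Finset.Icc 1 k).lcm
        (fun i : ℕ => (i : ℤ) * (a^2 * (i : ℤ)^2 - (b^2 - 4*a*c))) :=
  gcd_dvd_Bk_general a b c k n i j hij hj
end

section
/- Let f(x) = a x^2 + b x + c with integer coefficients and D = b^2 - 4ac such that D ≠ a^2 i^2 for all 1 ≤ i ≤ k, and B_k = lcm_{1 ≤ i ≤ k} { i·(a^2 i^2 - D) }. Then for all positive integers n outside the zero set of f(n), f(n+1), ..., f(n+k), and all 0 ≤ i < j ≤ k, gcd(f(n+i), f(n+j)) = gcd(f(n+B_k+i), f(n+B_k+j)). -/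
/-!
Any common divisor of `f(m)` and `f(m+d)` divides `d(a²d² - D)`, because
`d(a²d² - D) = 4ad·f(m) - (f(m+d) - f(m))(2am + b - ad)`. Hence `gcd(f(m), f(m+d))` divides
`B_k` whenever `1 ≤ d ≤ k`, and so does `gcd(f(m+B_k), f(m+B_k+d))`. Since `f(x + B_k) ≡ f(x)`
modulo `B_k`, each of these two gcds divides both arguments of the other.
-/

lemma Int.gcd_dvd_gcd_of_modEq {x y x' y' B : ℤ} (hx : x ≡ x' [ZMOD B]) (hy : y ≡ y' [ZMOD B])
    (hB : (x.gcd y : ℤ) ∣ B) : x.gcd y ∣ x'.gcd y' :=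
  Int.natCast_dvd_natCast.mp <| Int.dvd_coe_gcd
    (((hx.of_dvd hB).dvd_iff).mp (Int.gcd_dvd_left x y))
    (((hy.of_dvd hB).dvd_iff).mp (Int.gcd_dvd_right x y))

lemma Int.gcd_eq_gcd_of_modEq {x y x' y' B : ℤ} (hx : x ≡ x' [ZMOD B]) (hy : y ≡ y' [ZMOD B])
    (hB : (x.gcd y : ℤ) ∣ B) (hB' : (x'.gcd y' : ℤ) ∣ B) : x.gcd y = x'.gcd y' :=
  Nat.dvd_antisymm (Int.gcd_dvd_gcd_of_modEq hx hy hB)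
    (Int.gcd_dvd_gcd_of_modEq hx.symm hy.symm hB')

lemma quadratic_add_modEq (a b c m B : ℤ) :
    a * (m + B) ^ 2 + b * (m + B) + c ≡ a * m ^ 2 + b * m + c [ZMOD B] := by
  have hshift : m + B ≡ m [ZMOD B] := Int.add_modEq_right
  gcongr

lemma gcd_quadratic_dvd_mul_sub_discrim (a b c m d : ℤ) :
    (Int.gcd (a * m ^ 2 + b * m + c) (a * (m + d) ^ 2 + b * (m + d) + c) : ℤ) ∣
      d * (a ^ 2 * d ^ 2 - (b ^ 2 - 4 * a * c)) := by
  have h₁ := Int.gcd_dvd_left (a * m ^ 2 + b * m + c) (a * (m + d) ^ 2 + b * (m + d) + c)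
  have h₂ := Int.gcd_dvd_right (a * m ^ 2 + b * m + c) (a * (m + d) ^ 2 + b * (m + d) + c)
  have key : d * (a ^ 2 * d ^ 2 - (b ^ 2 - 4 * a * c)) =
      d * (4 * a) * (a * m ^ 2 + b * m + c)
        - (a * (m + d) ^ 2 + b * (m + d) + c - (a * m ^ 2 + b * m + c))
          * (2 * a * m + b - a * d) := by ring
  rw [key]
  exact dvd_sub (h₁.mul_left _) ((dvd_sub h₂ h₁).mul_right _)

lemma gcd_quadratic_add_eq_of_dvd (a b c m d B : ℤ)
    (hB : d * (a ^ 2 * d ^ 2 - (b ^ 2 - 4 * a * c)) ∣ B) :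
    Int.gcd (a * m ^ 2 + b * m + c) (a * (m + d) ^ 2 + b * (m + d) + c)
      = Int.gcd (a * (m + B) ^ 2 + b * (m + B) + c)
          (a * (m + B + d) ^ 2 + b * (m + B + d) + c) := by
  have hd : m + B + d = m + d + B := by ring
  rw [hd]
  refine Int.gcd_eq_gcd_of_modEq (quadratic_add_modEq a b c m B).symm
    (quadratic_add_modEq a b c (m + d) B).symm
    ((gcd_quadratic_dvd_mul_sub_discrim a b c m d).trans hB) ?_
  rw [← hd]
  exact (gcd_quadratic_dvd_mul_sub_discrim a b c (m + B) d).trans hB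

theorem gcd_shift_Bk_general (a b c : ℤ) (k : ℕ)
    (n : ℤ)
    (i j : ℕ) (hij : i < j) (hj : j ≤ k) :
    Int.gcd (a*(n+i)^2 + b*(n+i) + c) (a*(n+j)^2 + b*(n+j) + c)
      = Int.gcd
        (a*(n + (Finset.Icc 1 k).lcm
          (fun i : ℕ => (i : ℤ) * (a^2 * (i : ℤ)^2 - (b^2 - 4*a*c))) + i)^2
          + b*(n + (Finset.Icc 1 k).lcm
          (fun i : ℕ => (i : ℤ) * (a^2 * (i : ℤ)^2 - (b^2 - 4*a*c))) + i) + c)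
        (a*(n + (Finset.Icc 1 k).lcm
          (fun i : ℕ => (i : ℤ) * (a^2 * (i : ℤ)^2 - (b^2 - 4*a*c))) + j)^2
          + b*(n + (Finset.Icc 1 k).lcm
          (fun i : ℕ => (i : ℤ) * (a^2 * (i : ℤ)^2 - (b^2 - 4*a*c))) + j) + c) := by
  set B := (Finset.Icc 1 k).lcm
    fun i : ℕ => (i : ℤ) * (a ^ 2 * (i : ℤ) ^ 2 - (b ^ 2 - 4 * a * c))
  obtain ⟨d, rfl⟩ := Nat.exists_eq_add_of_le hij.le
  have hdB : (d : ℤ) * (a ^ 2 * (d : ℤ) ^ 2 - (b ^ 2 - 4 * a * c)) ∣ B :=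
    Finset.dvd_lcm (Finset.mem_Icc.mpr ⟨by omega, by omega⟩)
  convert gcd_quadratic_add_eq_of_dvd a b c (n + i) d B hdB using 3 <;> push_cast <;> ring

/-- With `f(x) = ax² + bx + c`, `D = b² - 4ac`, `D ≠ a²i²` for all `1 ≤ i ≤ k`, and
`B_k = lcm_{1 ≤ i ≤ k}{i(a²i² - D)}`: for all positive `n` with `f(n+i) ≠ 0` for
`0 ≤ i ≤ k`, and all `0 ≤ i < j ≤ k`,
`gcd(f(n+i), f(n+j)) = gcd(f(n+B_k+i), f(n+B_k+j))`. -/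
theorem gcd_shift_Bk (a b c : ℤ) (k : ℕ) (hk : 1 ≤ k)
    (hD : ∀ i : ℕ, 1 ≤ i → i ≤ k → b^2 - 4*a*c ≠ a^2 * (i : ℤ)^2)
    (n : ℤ) (hn : 1 ≤ n)
    (hnz : ∀ i : ℕ, i ≤ k → a*(n+i)^2 + b*(n+i) + c ≠ 0)
    (i j : ℕ) (hij : i < j) (hj : j ≤ k) :
    Int.gcd (a*(n+i)^2 + b*(n+i) + c) (a*(n+j)^2 + b*(n+j) + c)
      = Int.gcd
        (a*(n + (Finset.Icc 1 k).lcm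
          (fun i : ℕ => (i : ℤ) * (a^2 * (i : ℤ)^2 - (b^2 - 4*a*c))) + i)^2
          + b*(n + (Finset.Icc 1 k).lcm
          (fun i : ℕ => (i : ℤ) * (a^2 * (i : ℤ)^2 - (b^2 - 4*a*c))) + i) + c)
        (a*(n + (Finset.Icc 1 k).lcm
          (fun i : ℕ => (i : ℤ) * (a^2 * (i : ℤ)^2 - (b^2 - 4*a*c))) + j)^2
          + b*(n + (Finset.Icc 1 k).lcm
          (fun i : ℕ => (i : ℤ) * (a^2 * (i : ℤ)^2 - (b^2 - 4*a*c))) + j) + c) :=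
  gcd_shift_Bk_general a b c k n i j hij hj
end

section
/- Let f(x) = a x^2 + b x + c be a primitive quadratic integer polynomial (gcd(a,b,c) = 1), k ≥ 1, and define g_{k,f}(n) = (∏_{i=0}^k |f(n+i)|) / lcm_{0 ≤ i ≤ k}{f(n+i)} for n with all f(n+i) ≠ 0. If D = b^2 - 4ac satisfies D = a^2 i_0^2 for some integer 1 ≤ i_0 ≤ k, then g_{k,f}(n) is unbounded as n → ∞; in particular g_{k,f} is not eventually periodic. -/
private lemma aux_pos (a b c : ℤ) (ha : 1 ≤ a) (m : ℤ) (hm : |b| + |c| + 1 ≤ m) :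
    0 < a*m^2 + b*m + c := by
  have hb1 := abs_nonneg b
  have hc1 := abs_nonneg c
  have hb2 := neg_abs_le b
  have hc2 := neg_abs_le c
  have hm1 : (1:ℤ) ≤ m := by linarith
  have h3 : (|c|+1) * 1 ≤ m * (m - |b|) :=
    mul_le_mul (by linarith) (by linarith) (by norm_num) (by linarith)
  nlinarith [sq_nonneg m]

private lemma aux_gcd_mul_lcm (x y : ℤ) (hx : 0 < x) (hy : 0 < y) :
    gcd x y * lcm x y = x * y := by
  have h1 : (0:ℤ) ≤ gcd x y := by rw [← Int.coe_gcd]; positivity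
  have h2 : (0:ℤ) ≤ lcm x y := by rw [← Int.coe_lcm]; positivity
  rcases Int.associated_iff.mp (gcd_mul_lcm x y) with h | h
  · exact h
  · nlinarith

set_option maxHeartbeats 1000000 in
private lemma aux_core (a b c : ℤ) (ha : 1 ≤ a)
    (k : ℕ) (i₀ : ℕ) (hi₀ : 1 ≤ i₀) (hi₀k : i₀ ≤ k)
    (hD : b^2 - 4*a*c = a^2 * (i₀ : ℤ)^2) (M : ℤ) (n : ℤ)
    (hn : 4*a*(|M|+1) + |b| + |c| + 1 ≤ n) :
    1 ≤ n ∧ (∀ i : ℕ, i ≤ k → a*(n+i)^2 + b*(n+i) + c ≠ 0) ∧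
      M < (∏ i ∈ Finset.range (k+1), |a*(n+i)^2 + b*(n+i) + c|) /
            (Finset.range (k+1)).lcm (fun i : ℕ => a*(n+i)^2 + b*(n+i) + c) := by
  have hMabs := abs_nonneg M
  have hMabs2 := le_abs_self M
  have hbabs := abs_nonneg b
  have hcabs := abs_nonneg c
  have hb2 := neg_abs_le b
  have hc2 := neg_abs_le c
  have raM1 : (1:ℤ) ≤ a*(|M|+1) := by nlinarith
  have h1n : (1:ℤ) ≤ n := by linarith
  have p1 : 0 ≤ (a-1)*n := mul_nonneg (by linarith) (by linarith)
  have hi₀1 : (1:ℤ) ≤ (i₀:ℤ) := by exact_mod_cast hi₀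
  have hai : (1:ℤ) ≤ a*(i₀:ℤ) := by nlinarith
  have r : 0 ≤ a*(|M| - M) := mul_nonneg (by linarith) (by linarith)
  have hfpos : ∀ i : ℕ, 0 < a*(n+(i:ℤ))^2 + b*(n+(i:ℤ)) + c := by
    intro i
    refine aux_pos a b c ha _ ?_
    have : (0:ℤ) ≤ (i:ℤ) := Int.natCast_nonneg i
    linarith
  refine ⟨h1n, fun i _ => ne_of_gt (hfpos i), ?_⟩
  set F : ℕ → ℤ := fun i : ℕ => a*(n+(i:ℤ))^2 + b*(n+(i:ℤ)) + c with hF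
  have q0 : 0 ≤ a*|M| := mul_nonneg (by linarith) hMabs
  have hw0 : 0 < 2*a*n + b + a*(i₀:ℤ) := by nlinarith
  have hwM : 4*a*M < 2*a*n + b + a*(i₀:ℤ) := by nlinarith
  have hdvd0 : (2*a*n + b + a*(i₀:ℤ)) ∣ 4*a * F 0 :=
    ⟨2*a*n + b + a*(i₀:ℤ) - 2*a*(i₀:ℤ), by
      simp only [hF]; push_cast; linear_combination -hD⟩
  have hdvdi : (2*a*n + b + a*(i₀:ℤ)) ∣ 4*a * F i₀ :=
    ⟨2*a*n + b + a*(i₀:ℤ) + 2*a*(i₀:ℤ), by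
      simp only [hF]; push_cast; linear_combination -hD⟩
  have hd1 : (0:ℤ) ≤ gcd (F 0) (F i₀) := by rw [← Int.coe_gcd]; positivity
  have hd2 : gcd (F 0) (F i₀) ≠ 0 := by
    intro h
    exact absurd ((gcd_eq_zero_iff _ _).mp h).1 (ne_of_gt (hfpos 0))
  have hd0 : 0 < gcd (F 0) (F i₀) := lt_of_le_of_ne hd1 (Ne.symm hd2)
  have hwd : (2*a*n + b + a*(i₀:ℤ)) ∣ 4*a*gcd (F 0) (F i₀) := by
    have h4a : (0:ℤ) ≤ 4*a := by linarith
    have h := dvd_gcd hdvd0 hdvdi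
    rwa [gcd_mul_left, Int.normalize_of_nonneg h4a] at h
  have hMd : M < gcd (F 0) (F i₀) := by
    have hle : 2*a*n + b + a*(i₀:ℤ) ≤ 4*a*gcd (F 0) (F i₀) :=
      Int.le_of_dvd (by positivity) hwd
    nlinarith
  have hmemi₀ : i₀ ∈ Finset.range (k+1) := Finset.mem_range.mpr (by omega)
  have hmem0 : 0 ∈ (Finset.range (k+1)).erase i₀ := by
    rw [Finset.mem_erase]
    exact ⟨by omega, Finset.mem_range.mpr (by omega)⟩
  set R : ℤ := ∏ i ∈ ((Finset.range (k+1)).erase i₀).erase 0, F i with hR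
  have hProd : ∏ i ∈ Finset.range (k+1), F i = F i₀ * (F 0 * R) := by
    rw [← Finset.mul_prod_erase _ _ hmemi₀, ← Finset.mul_prod_erase _ _ hmem0]
  have hPpos : 0 < ∏ i ∈ Finset.range (k+1), F i :=
    Finset.prod_pos (fun i _ => hfpos i)
  set L : ℤ := (Finset.range (k+1)).lcm F with hL
  have hL1 : 0 ≤ L := by
    refine Int.nonneg_of_normalize_eq_self ?_
    rw [hL]; exact Finset.normalize_lcm
  have hLT : L ∣ lcm (F 0) (F i₀) * R := by
    refine Finset.lcm_dvd ?_
    intro j hj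
    rcases eq_or_ne j 0 with rfl | hj0
    · exact dvd_mul_of_dvd_left (dvd_lcm_left _ _) R
    rcases eq_or_ne j i₀ with rfl | hji
    · exact dvd_mul_of_dvd_left (dvd_lcm_right _ _) R
    · exact Dvd.dvd.mul_left
        (Finset.dvd_prod_of_mem F
          (by rw [Finset.mem_erase, Finset.mem_erase]; exact ⟨hj0, hji, hj⟩)) _
  have hgl : gcd (F 0) (F i₀) * lcm (F 0) (F i₀) = F 0 * F i₀ :=
    aux_gcd_mul_lcm _ _ (hfpos 0) (hfpos i₀)
  have hdLP : gcd (F 0) (F i₀) * L ∣ ∏ i ∈ Finset.range (k+1), F i := by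
    rw [hProd]
    have h1 : gcd (F 0) (F i₀) * L ∣ gcd (F 0) (F i₀) * (lcm (F 0) (F i₀) * R) :=
      mul_dvd_mul_left _ hLT
    have h2 : gcd (F 0) (F i₀) * (lcm (F 0) (F i₀) * R) = F i₀ * (F 0 * R) := by
      rw [← mul_assoc, hgl]; ring
    rwa [h2] at h1
  obtain ⟨s, hs⟩ := hdLP
  have hLne : L ≠ 0 := by
    intro h
    rw [h] at hs
    simp at hs
    omega
  have hLpos : 0 < L := lt_of_le_of_ne hL1 (Ne.symm hLne)
  have hs1 : 1 ≤ s := by nlinarith [mul_pos hd0 hLpos]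
  have habs : ∏ i ∈ Finset.range (k+1), |F i| = ∏ i ∈ Finset.range (k+1), F i :=
    Finset.prod_congr rfl (fun i _ => abs_of_pos (hfpos i))
  have hdiv : (∏ i ∈ Finset.range (k+1), |F i|) / L = gcd (F 0) (F i₀) * s := by
    rw [habs, hs, show gcd (F 0) (F i₀) * L * s = L * (gcd (F 0) (F i₀) * s) by ring]
    exact Int.mul_ediv_cancel_left _ hLne
  show M < (∏ i ∈ Finset.range (k+1), |F i|) / L
  rw [hdiv]
  nlinarith

private lemma aux_main (a b c : ℤ) (ha : 1 ≤ a)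
    (k : ℕ) (i₀ : ℕ) (hi₀ : 1 ≤ i₀) (hi₀k : i₀ ≤ k)
    (hD : b^2 - 4*a*c = a^2 * (i₀ : ℤ)^2) (M K : ℤ) :
    ∃ n : ℤ, K ≤ n ∧ 1 ≤ n ∧ (∀ i : ℕ, i ≤ k → a*(n+i)^2 + b*(n+i) + c ≠ 0) ∧
      M < (∏ i ∈ Finset.range (k+1), |a*(n+i)^2 + b*(n+i) + c|) /
            (Finset.range (k+1)).lcm (fun i : ℕ => a*(n+i)^2 + b*(n+i) + c) := by
  obtain ⟨h1, h2, h3⟩ := aux_core a b c ha k i₀ hi₀ hi₀k hD M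
    (max K (4*a*(|M|+1) + |b| + |c| + 1)) (le_max_right _ _)
  exact ⟨_, le_max_left _ _, h1, h2, h3⟩

set_option maxHeartbeats 1000000 in
/-- For a primitive quadratic `f(x) = ax² + bx + c` (a ≥ 1) whose discriminant
`D = b² - 4ac` equals `a²i₀²` for some `1 ≤ i₀ ≤ k`, the function
`g_{k,f}(n) = (∏_{i=0}^k |f(n+i)|)/lcm_{0≤i≤k} f(n+i)` is unbounded as `n → ∞`;
in particular `g_{k,f}` is not eventually periodic. -/
theorem g_unbounded_of_reducible (a b c : ℤ) (ha : 1 ≤ a)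
    (hprim : Int.gcd a (Int.gcd b c) = 1)
    (k : ℕ) (hk : 1 ≤ k) (i₀ : ℕ) (hi₀ : 1 ≤ i₀) (hi₀k : i₀ ≤ k)
    (hD : b^2 - 4*a*c = a^2 * (i₀ : ℤ)^2) :
    (∀ M : ℤ, ∃ n : ℤ, 1 ≤ n ∧ (∀ i : ℕ, i ≤ k → a*(n+i)^2 + b*(n+i) + c ≠ 0) ∧
      M < (∏ i ∈ Finset.range (k+1), |a*(n+i)^2 + b*(n+i) + c|) /
            (Finset.range (k+1)).lcm (fun i : ℕ => a*(n+i)^2 + b*(n+i) + c)) ∧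
    ¬ ∃ t : ℤ, 1 ≤ t ∧ ∃ n₀ : ℤ, ∀ n : ℤ, n₀ ≤ n →
        (∀ i : ℕ, i ≤ k → a*(n+i)^2 + b*(n+i) + c ≠ 0) →
        (∀ i : ℕ, i ≤ k → a*(n+t+i)^2 + b*(n+t+i) + c ≠ 0) →
        (∏ i ∈ Finset.range (k+1), |a*(n+t+i)^2 + b*(n+t+i) + c|) /
            (Finset.range (k+1)).lcm (fun i : ℕ => a*(n+t+i)^2 + b*(n+t+i) + c)
        = (∏ i ∈ Finset.range (k+1), |a*(n+i)^2 + b*(n+i) + c|) /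
            (Finset.range (k+1)).lcm (fun i : ℕ => a*(n+i)^2 + b*(n+i) + c) := by
  constructor
  · intro M
    obtain ⟨n, _, h1, h2, h3⟩ := aux_main a b c ha k i₀ hi₀ hi₀k hD M 1
    exact ⟨n, h1, h2, h3⟩
  · rintro ⟨t, ht, n₀, H⟩
    set g : ℤ → ℤ := fun n =>
      (∏ i ∈ Finset.range (k+1), |a*(n+i)^2 + b*(n+i) + c|) /
        (Finset.range (k+1)).lcm (fun i : ℕ => a*(n+i)^2 + b*(n+i) + c) with hg
    set N : ℤ := max n₀ (|b| + |c| + 1) with hN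
    have hNb : |b| + |c| + 1 ≤ N := le_max_right _ _
    have hnz : ∀ m : ℤ, N ≤ m → ∀ i : ℕ, i ≤ k → a*(m+(i:ℤ))^2 + b*(m+(i:ℤ)) + c ≠ 0 := by
      intro m hm i _
      refine ne_of_gt (aux_pos a b c ha _ ?_)
      have : (0:ℤ) ≤ (i:ℤ) := Int.natCast_nonneg i
      linarith
    have hgper : ∀ n : ℤ, N ≤ n → g (n + t) = g n := by
      intro n hn
      exact H n (le_trans (le_max_left _ _) hn) (hnz n hn)
        (fun i hi => by
          have := hnz (n + t) (by linarith) i hi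
          convert this using 3 <;> ring_nf)
    have hne : (Finset.Icc N (N + t - 1)).Nonempty := ⟨N, Finset.mem_Icc.mpr ⟨le_refl N, by omega⟩⟩
    set B : ℤ := (Finset.Icc N (N + t - 1)).sup' hne g with hB
    have key : ∀ m : ℕ, ∀ n : ℤ, N ≤ n → n ≤ N + (m:ℤ) → g n ≤ B := by
      intro m
      induction m with
      | zero =>
        intro n h1 h2
        exact Finset.le_sup' g (Finset.mem_Icc.mpr ⟨h1, by omega⟩)
      | succ m ih =>
        intro n h1 h2
        rcases lt_or_ge n (N + t) with h | h
        · exact Finset.le_sup' g (Finset.mem_Icc.mpr ⟨h1, by omega⟩)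
        · have e : g (n - t + t) = g (n - t) := hgper (n - t) (by omega)
          have e2 : n - t + t = n := by ring
          rw [e2] at e
          rw [e]
          exact ih (n - t) (by omega) (by push_cast at h2 ⊢; omega)
    obtain ⟨n, hKn, h1, h2, h3⟩ := aux_main a b c ha k i₀ hi₀ hi₀k hD B N
    have h3' : B < g n := h3
    have h4 : g n ≤ B := key (n - N).toNat n hKn (by omega)
    omega
end

section
/- Let f(x) = a x^2 + b x + c be a primitive quadratic integer polynomial with D = b^2 - 4ac, k ≥ 1 an integer with D ≠ a^2 i^2 for all 1 ≤ i ≤ k, and B_k = lcm_{1 ≤ i ≤ k}{i(a^2 i^2 - D)}. Then g_{k,f}(n + B_k) = g_{k,f}(n) for all positive integers n for which all of f(n+i) and f(n+B_k+i), 0 ≤ i ≤ k, are nonzero; i.e., g_{k,f} is eventually periodic with period B_k. -/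
/-!
For nonzero integers `F i`, the quotient `(∏ |F i|) / lcm (F i)` depends only on the pairwise gcds:
adjoining `F a` multiplies it by `gcd (F a) (lcm_{i ∈ s} F i) = lcm_{i ∈ s} gcd (F a) (F i)`,
gcd distributing over lcm. For `F i = f (n + i)` each pairwise gcd divides `B_k`, because
`d (a²d² - D)` is a linear combination of `f x` and `f (x + d)`. Since `f (n + B_k + i) ≡ f (n + i)`
modulo `B_k`, a pairwise gcd dividing `B_k` does not change under `n ↦ n + B_k`.
-/

open Finset

theorem Nat.gcd_lcm_distrib {x y z : ℕ} (hx : x ≠ 0) (hy : y ≠ 0) (hz : z ≠ 0) :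
    gcd x (lcm y z) = lcm (gcd x y) (gcd x z) := by
  have hxy := Nat.gcd_ne_zero_left (n := y) hx
  have hxz := Nat.gcd_ne_zero_left (n := z) hx
  refine Nat.eq_of_factorization_eq (Nat.gcd_ne_zero_left hx) (Nat.lcm_ne_zero hxy hxz) fun p => ?_
  rw [Nat.factorization_gcd hx (Nat.lcm_ne_zero hy hz), Nat.factorization_lcm hy hz,
    Nat.factorization_lcm hxy hxz, Nat.factorization_gcd hx hy, Nat.factorization_gcd hx hz]
  exact inf_sup_left _ _ _

theorem Int.gcd_lcm_distrib {x y z : ℤ} (hx : x ≠ 0) (hy : y ≠ 0) (hz : z ≠ 0) :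
    GCDMonoid.gcd x (GCDMonoid.lcm y z) = GCDMonoid.lcm (GCDMonoid.gcd x y) (GCDMonoid.gcd x z) := by
  rw [← Int.coe_lcm y z, ← Int.coe_gcd x, ← Int.coe_gcd x y, ← Int.coe_gcd x z, ← Int.coe_lcm]
  simp only [Int.gcd, Int.lcm, Int.natAbs_natCast]
  rw [Nat.gcd_lcm_distrib] <;> simpa

theorem Int.gcd_finset_lcm {ι : Type*} [DecidableEq ι] {s : Finset ι} {f : ι → ℤ} {x : ℤ}
    (hx : x ≠ 0) (hf : ∀ i ∈ s, f i ≠ 0) :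
    GCDMonoid.gcd x (s.lcm f) = s.lcm fun i => GCDMonoid.gcd x (f i) := by
  induction s using Finset.induction_on with
  | empty => simp
  | insert a s ha ih =>
    rw [forall_mem_insert] at hf
    have hs : s.lcm f ≠ 0 := Finset.lcm_eq_zero_iff.not.mpr fun ⟨i, hi, h⟩ => hf.2 i hi h
    rw [lcm_insert, lcm_insert, Int.gcd_lcm_distrib hx hf.1 hs, ih hf.2]

theorem Int.prod_abs_div_lcm_insert {ι : Type*} [DecidableEq ι] {s : Finset ι} {a : ι}
    (ha : a ∉ s) {F : ι → ℤ} (hF : ∀ i ∈ insert a s, F i ≠ 0) :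
    (∏ i ∈ insert a s, |F i|) / (insert a s).lcm F
      = GCDMonoid.gcd (F a) (s.lcm F) * ((∏ i ∈ s, |F i|) / s.lcm F) := by
  have hL : (insert a s).lcm F ≠ 0 := Finset.lcm_eq_zero_iff.not.mpr fun ⟨i, hi, h⟩ => hF i hi h
  have hLs : s.lcm F ≠ 0 :=
    Finset.lcm_eq_zero_iff.not.mpr fun ⟨i, hi, h⟩ => hF i (mem_insert_of_mem hi) h
  obtain ⟨q, hq⟩ : s.lcm F ∣ ∏ i ∈ s, |F i| := by
    rw [← abs_prod]
    exact (dvd_abs _ _).mpr (Finset.lcm_dvd fun i hi => dvd_prod_of_mem F hi)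
  have hgl : GCDMonoid.gcd (F a) (s.lcm F) * GCDMonoid.lcm (F a) (s.lcm F) = |F a| * s.lcm F := by
    rw [← Int.coe_gcd, ← Int.coe_lcm, ← Nat.cast_mul, Int.gcd_mul_lcm, Nat.cast_mul,
      Int.natCast_natAbs, Int.natCast_natAbs,
      abs_of_nonneg (Int.nonneg_of_normalize_eq_self normalize_lcm)]
  rw [lcm_insert] at hL
  rw [prod_insert ha, hq, lcm_insert, Int.mul_ediv_cancel_left q hLs, ← mul_assoc, ← hgl,
    mul_comm (GCDMonoid.gcd _ _), mul_assoc, Int.mul_ediv_cancel_left _ hL]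

theorem Int.prod_abs_div_lcm_eq_of_gcd_eq {ι : Type*} {s : Finset ι} {F F' : ι → ℤ}
    (hF : ∀ i ∈ s, F i ≠ 0) (hF' : ∀ i ∈ s, F' i ≠ 0)
    (hgcd : ∀ i ∈ s, ∀ j ∈ s, i ≠ j → GCDMonoid.gcd (F i) (F j) = GCDMonoid.gcd (F' i) (F' j)) :
    (∏ i ∈ s, |F i|) / s.lcm F = (∏ i ∈ s, |F' i|) / s.lcm F' := by
  classical
  induction s using Finset.induction_on with
  | empty => simp
  | insert a s ha ih =>
    have hFs : ∀ i ∈ s, F i ≠ 0 := fun i hi => hF i (mem_insert_of_mem hi)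
    have hF's : ∀ i ∈ s, F' i ≠ 0 := fun i hi => hF' i (mem_insert_of_mem hi)
    rw [Int.prod_abs_div_lcm_insert ha hF, Int.prod_abs_div_lcm_insert ha hF',
      Int.gcd_finset_lcm (hF a (mem_insert_self a s)) hFs,
      Int.gcd_finset_lcm (hF' a (mem_insert_self a s)) hF's,
      ih hFs hF's fun i hi j hj => hgcd i (mem_insert_of_mem hi) j (mem_insert_of_mem hj)]
    congr 1
    refine lcm_congr rfl fun i hi => hgcd a (mem_insert_self a s) i (mem_insert_of_mem hi) ?_
    rintro rfl
    exact ha hi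

theorem gcd_eq_gcd_of_dvd_sub {α : Type*} [CommRing α] [IsDomain α] [NormalizedGCDMonoid α]
    {m x y x' y' : α} (hx : m ∣ x' - x) (hy : m ∣ y' - y)
    (h : GCDMonoid.gcd x y ∣ m) (h' : GCDMonoid.gcd x' y' ∣ m) :
    GCDMonoid.gcd x y = GCDMonoid.gcd x' y' := by
  refine dvd_antisymm_of_normalize_eq (normalize_gcd _ _) (normalize_gcd _ _) ?_ ?_
  · exact dvd_gcd (by simpa using dvd_add (h.trans hx) (gcd_dvd_left x y))
      (by simpa using dvd_add (h.trans hy) (gcd_dvd_right x y))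
  · exact dvd_gcd (by simpa using dvd_sub (gcd_dvd_left x' y') (h'.trans hx))
      (by simpa using dvd_sub (gcd_dvd_right x' y') (h'.trans hy))

theorem dvd_mul_sq_sub_discrim_of_dvd {R : Type*} [CommRing R] {a b c x d e : R}
    (hx : e ∣ a * x ^ 2 + b * x + c) (hxd : e ∣ a * (x + d) ^ 2 + b * (x + d) + c) :
    e ∣ d * (a ^ 2 * d ^ 2 - (b ^ 2 - 4 * a * c)) := by
  have hcomb : d * (a ^ 2 * d ^ 2 - (b ^ 2 - 4 * a * c)) = 4 * a * d * (a * x ^ 2 + b * x + c)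
      + (a * d - 2 * a * x - b) * ((a * (x + d) ^ 2 + b * (x + d) + c) - (a * x ^ 2 + b * x + c)) := by
    ring
  rw [hcomb]
  exact dvd_add (hx.mul_left _) ((dvd_sub hxd hx).mul_left _)

theorem gcd_quadratic_dvd_lcm (a b c m : ℤ) {k i j : ℕ} (hi : i ≤ k) (hj : j ≤ k) (hij : i ≠ j) :
    GCDMonoid.gcd (a * (m + i) ^ 2 + b * (m + i) + c) (a * (m + j) ^ 2 + b * (m + j) + c) ∣
      (Icc 1 k).lcm fun d : ℕ => (d : ℤ) * (a ^ 2 * (d : ℤ) ^ 2 - (b ^ 2 - 4 * a * c)) := by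
  wlog hlt : i < j generalizing i j
  · rw [gcd_comm]
    exact this hj hi hij.symm (by omega)
  obtain ⟨d, rfl⟩ := Nat.exists_eq_add_of_lt hlt
  have hd : d + 1 ∈ Icc 1 k := mem_Icc.mpr ⟨by omega, by omega⟩
  refine (dvd_mul_sq_sub_discrim_of_dvd (x := m + i) (gcd_dvd_left _ _) ?_).trans (dvd_lcm hd)
  convert gcd_dvd_right _ _ using 3 <;> push_cast <;> ring

theorem g_periodic_Bk_general (a b c : ℤ)
    (k : ℕ)
    (n : ℤ)
    (hnz : ∀ i : ℕ, i ≤ k → a*(n+i)^2 + b*(n+i) + c ≠ 0)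
    (hnz' : ∀ i : ℕ, i ≤ k →
      a*(n + (Finset.Icc 1 k).lcm
          (fun i : ℕ => (i : ℤ) * (a^2 * (i : ℤ)^2 - (b^2 - 4*a*c))) + i)^2
        + b*(n + (Finset.Icc 1 k).lcm
          (fun i : ℕ => (i : ℤ) * (a^2 * (i : ℤ)^2 - (b^2 - 4*a*c))) + i) + c ≠ 0) :
    (∏ i ∈ Finset.range (k+1),
        |a*(n + (Finset.Icc 1 k).lcm
            (fun i : ℕ => (i : ℤ) * (a^2 * (i : ℤ)^2 - (b^2 - 4*a*c))) + i)^2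
          + b*(n + (Finset.Icc 1 k).lcm
            (fun i : ℕ => (i : ℤ) * (a^2 * (i : ℤ)^2 - (b^2 - 4*a*c))) + i) + c|) /
      (Finset.range (k+1)).lcm (fun i : ℕ =>
        a*(n + (Finset.Icc 1 k).lcm
            (fun i : ℕ => (i : ℤ) * (a^2 * (i : ℤ)^2 - (b^2 - 4*a*c))) + i)^2
          + b*(n + (Finset.Icc 1 k).lcm
            (fun i : ℕ => (i : ℤ) * (a^2 * (i : ℤ)^2 - (b^2 - 4*a*c))) + i) + c)
    = (∏ i ∈ Finset.range (k+1), |a*(n+i)^2 + b*(n+i) + c|) /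
        (Finset.range (k+1)).lcm (fun i : ℕ => a*(n+i)^2 + b*(n+i) + c) := by
  set B := (Icc 1 k).lcm fun i : ℕ => (i : ℤ) * (a ^ 2 * (i : ℤ) ^ 2 - (b ^ 2 - 4 * a * c))
  have hshift : ∀ x : ℤ, B ∣ (a * (x + B) ^ 2 + b * (x + B) + c) - (a * x ^ 2 + b * x + c) :=
    fun x => ⟨2 * a * x + b + a * B, by ring⟩
  refine Int.prod_abs_div_lcm_eq_of_gcd_eq (fun i hi => hnz' i (Nat.lt_succ_iff.mp (mem_range.mp hi)))
    (fun i hi => hnz i (Nat.lt_succ_iff.mp (mem_range.mp hi))) fun i hi j hj hij => ?_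
  simp only [mem_range, Nat.lt_succ_iff] at hi hj
  refine (gcd_eq_gcd_of_dvd_sub ?_ ?_ (gcd_quadratic_dvd_lcm a b c n hi hj hij)
    (gcd_quadratic_dvd_lcm a b c (n + B) hi hj hij)).symm
  all_goals simpa only [add_right_comm n B] using hshift _

/-- For primitive quadratic `f(x) = ax² + bx + c` (a ≥ 1) with `D = b² - 4ac ≠ a²i²`
for all `1 ≤ i ≤ k`, and `B_k = lcm_{1 ≤ i ≤ k}{i(a²i² - D)}`, the function
`g_{k,f}(n) = (∏_{i=0}^k |f(n+i)|)/lcm_{0≤i≤k} f(n+i)` satisfies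
`g_{k,f}(n + B_k) = g_{k,f}(n)` wherever both sides are defined:
`g_{k,f}` is eventually periodic with period `B_k`. -/
theorem g_periodic_Bk (a b c : ℤ) (ha : 1 ≤ a)
    (hprim : Int.gcd a (Int.gcd b c) = 1)
    (k : ℕ) (hk : 1 ≤ k)
    (hD : ∀ i : ℕ, 1 ≤ i → i ≤ k → b^2 - 4*a*c ≠ a^2 * (i : ℤ)^2)
    (n : ℤ) (hn : 1 ≤ n)
    (hnz : ∀ i : ℕ, i ≤ k → a*(n+i)^2 + b*(n+i) + c ≠ 0)
    (hnz' : ∀ i : ℕ, i ≤ k →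
      a*(n + (Finset.Icc 1 k).lcm
          (fun i : ℕ => (i : ℤ) * (a^2 * (i : ℤ)^2 - (b^2 - 4*a*c))) + i)^2
        + b*(n + (Finset.Icc 1 k).lcm
          (fun i : ℕ => (i : ℤ) * (a^2 * (i : ℤ)^2 - (b^2 - 4*a*c))) + i) + c ≠ 0) :
    (∏ i ∈ Finset.range (k+1),
        |a*(n + (Finset.Icc 1 k).lcm
            (fun i : ℕ => (i : ℤ) * (a^2 * (i : ℤ)^2 - (b^2 - 4*a*c))) + i)^2
          + b*(n + (Finset.Icc 1 k).lcm
            (fun i : ℕ => (i : ℤ) * (a^2 * (i : ℤ)^2 - (b^2 - 4*a*c))) + i) + c|) /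
      (Finset.range (k+1)).lcm (fun i : ℕ =>
        a*(n + (Finset.Icc 1 k).lcm
            (fun i : ℕ => (i : ℤ) * (a^2 * (i : ℤ)^2 - (b^2 - 4*a*c))) + i)^2
          + b*(n + (Finset.Icc 1 k).lcm
            (fun i : ℕ => (i : ℤ) * (a^2 * (i : ℤ)^2 - (b^2 - 4*a*c))) + i) + c)
    = (∏ i ∈ Finset.range (k+1), |a*(n+i)^2 + b*(n+i) + c|) /
        (Finset.range (k+1)).lcm (fun i : ℕ => a*(n+i)^2 + b*(n+i) + c) :=
  g_periodic_Bk_general a b c k n hnz hnz'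
end

section
/- Let p be an odd prime not dividing a, let f(x) = a x^2 + b x + c with D = b^2 - 4ac, and let e be a positive integer with e ≤ v_p(D). Then the set of solutions in [1, p^e] of f(x) ≡ 0 (mod p^e) is exactly { r + m·p^{⌈e/2⌉} : 0 ≤ m < p^{⌊e/2⌋} }, where r ∈ [1, p^{⌈e/2⌉}] is the unique residue with 2a·r + b ≡ 0 (mod p^{⌈e/2⌉}). In particular there are exactly p^{⌊e/2⌋} solutions. -/
private lemma pow_dvd_of_pow_dvd_sq {p : ℕ} (hp : p.Prime) {y : ℤ} {e k : ℕ}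
    (hk : 2 * k ≤ e + 1) (h : (p:ℤ)^e ∣ y^2) : (p:ℤ)^k ∣ y := by
  rcases eq_or_ne y 0 with rfl | hy
  · exact dvd_zero _
  · have h1 : p ^ e ∣ (y ^ 2).natAbs := by
      have h0 := Int.natAbs_dvd_natAbs.mpr h
      rwa [Int.natAbs_pow, Int.natAbs_natCast] at h0
    have h2 : p ^ e ∣ y.natAbs ^ 2 := by rwa [Int.natAbs_pow] at h1
    have hy0 : y.natAbs ≠ 0 := by simpa using hy
    have h3 : e ≤ (y.natAbs ^ 2).factorization p :=
      (Nat.Prime.pow_dvd_iff_le_factorization hp (by positivity)).mp h2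
    rw [Nat.factorization_pow] at h3
    simp only [Finsupp.smul_apply, smul_eq_mul] at h3
    have h4 : k ≤ y.natAbs.factorization p := by omega
    have h5 : p ^ k ∣ y.natAbs :=
      (Nat.Prime.pow_dvd_iff_le_factorization hp hy0).mpr h4
    have h6 : ((p:ℤ))^k ∣ (y.natAbs : ℤ) := by exact_mod_cast h5
    exact h6.trans (Int.natAbs_dvd.mpr dvd_rfl)

/-- Let `p` be an odd prime with `p ∤ a`, `f(x) = ax² + bx + c`, `D = b² - 4ac`,
and `1 ≤ e ≤ v_p(D)` (i.e. `pᵉ ∣ D`). Then the solutions of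
`f(x) ≡ 0 (mod pᵉ)` in `[1, pᵉ]` are exactly `{ r + m·p^⌈e/2⌉ : 0 ≤ m < p^⌊e/2⌋ }`,
where `r ∈ [1, p^⌈e/2⌉]` is the unique residue with `2ar + b ≡ 0 (mod p^⌈e/2⌉)`.
In particular there are exactly `p^⌊e/2⌋` solutions. -/
theorem solutions_small_e (a b c : ℤ) (p : ℕ) (hp : p.Prime) (hodd : p ≠ 2)
    (hpa : ¬ (p : ℤ) ∣ a) (e : ℕ) (he : 1 ≤ e)
    (hD : (p : ℤ)^e ∣ (b^2 - 4*a*c)) :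
    (∃! r : ℤ, 1 ≤ r ∧ r ≤ (p : ℤ)^((e+1)/2) ∧
        (p : ℤ)^((e+1)/2) ∣ (2*a*r + b)) ∧
    (∀ r : ℤ, (1 ≤ r ∧ r ≤ (p : ℤ)^((e+1)/2) ∧ (p : ℤ)^((e+1)/2) ∣ (2*a*r + b)) →
      ({x : ℤ | 1 ≤ x ∧ x ≤ (p : ℤ)^e ∧ (p : ℤ)^e ∣ (a*x^2 + b*x + c)}
        = {x : ℤ | ∃ m : ℕ, m < p^(e/2) ∧ x = r + (m : ℤ) * (p : ℤ)^((e+1)/2)})) ∧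
    ({x : ℤ | 1 ≤ x ∧ x ≤ (p : ℤ)^e ∧
        (p : ℤ)^e ∣ (a*x^2 + b*x + c)}.ncard = p^(e/2)) := by
  have hP : Prime (p:ℤ) := Nat.prime_iff_prime_int.mp hp
  have hppos : (0:ℤ) < (p:ℤ) := by exact_mod_cast hp.pos
  set k := (e+1)/2 with hkdef
  set j := e/2 with hjdef
  have hkj : k + j = e := by omega
  have hp2 : ¬ (p:ℤ) ∣ 2 := by
    intro h
    have h2 : p ∣ 2 := by exact_mod_cast h
    exact hodd ((Nat.prime_dvd_prime_iff_eq hp Nat.prime_two).mp h2)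
  have hp2a : ¬ (p:ℤ) ∣ 2*a := fun h => by
    rcases hP.dvd_mul.mp h with h' | h' <;> [exact hp2 h'; exact hpa h']
  have hp4a : ¬ (p:ℤ) ∣ 4*a := fun h => by
    have : (p:ℤ) ∣ 2*(2*a) := by rwa [show (2:ℤ)*(2*a) = 4*a by ring]
    rcases hP.dvd_mul.mp this with h' | h' <;> [exact hp2 h'; exact hp2a h']
  have hPk : (0:ℤ) < (p:ℤ)^k := by positivity
  have hPe : ((p:ℤ)^e) = (p:ℤ)^k * (p:ℤ)^j := by rw [← pow_add, hkj]
  have hcop : IsCoprime ((p:ℤ)^k) (2*a) :=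
    (hP.coprime_iff_not_dvd.mpr hp2a).pow_left
  have hcop4 : IsCoprime ((p:ℤ)^e) (4*a) :=
    (hP.coprime_iff_not_dvd.mpr hp4a).pow_left
  -- key equivalence
  have key : ∀ x : ℤ, ((p:ℤ)^e ∣ (a*x^2 + b*x + c)) ↔ (p:ℤ)^k ∣ (2*a*x + b) := by
    intro x
    constructor
    · intro h
      have h1 : (p:ℤ)^e ∣ (2*a*x+b)^2 := by
        have h1 : (p:ℤ)^e ∣ 4*a*(a*x^2+b*x+c) + (b^2 - 4*a*c) :=
          dvd_add (h.mul_left (4*a)) hD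
        rwa [show 4*a*(a*x^2+b*x+c) + (b^2 - 4*a*c) = (2*a*x+b)^2 by ring] at h1
      exact pow_dvd_of_pow_dvd_sq hp (by omega) h1
    · intro h
      have h1 : (p:ℤ)^e ∣ (2*a*x+b)^2 :=
        dvd_trans (pow_dvd_pow _ (show e ≤ k*2 by omega))
          (by rw [pow_mul]; exact pow_dvd_pow_of_dvd h 2)
      have h2 : (p:ℤ)^e ∣ (4*a)*(a*x^2+b*x+c) := by
        have h3 := dvd_sub h1 hD
        rwa [show (2*a*x+b)^2 - (b^2-4*a*c) = (4*a)*(a*x^2+b*x+c) by ring] at h3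
      exact hcop4.dvd_of_dvd_mul_left h2
  -- uniqueness helper
  have huniq : ∀ r₁ r₂ : ℤ,
      (1 ≤ r₁ ∧ r₁ ≤ (p:ℤ)^k ∧ (p:ℤ)^k ∣ (2*a*r₁ + b)) →
      (1 ≤ r₂ ∧ r₂ ≤ (p:ℤ)^k ∧ (p:ℤ)^k ∣ (2*a*r₂ + b)) → r₁ = r₂ := by
    rintro r₁ r₂ ⟨h1, h2, h3⟩ ⟨h4, h5, h6⟩
    have hd : (p:ℤ)^k ∣ (2*a)*(r₁ - r₂) := by
      have h7 := dvd_sub h3 h6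
      rwa [show (2*a*r₁+b) - (2*a*r₂+b) = (2*a)*(r₁-r₂) by ring] at h7
    have hd2 : (p:ℤ)^k ∣ r₁ - r₂ := hcop.dvd_of_dvd_mul_left hd
    have h8 := Int.eq_zero_of_abs_lt_dvd hd2 (by rw [abs_lt]; constructor <;> linarith)
    linarith
  -- existence of r
  obtain ⟨u, v, huv⟩ := (hcop.symm : IsCoprime (2*a) ((p:ℤ)^k))
  set r₀ : ℤ := -(b*u) with hr0
  have hr0dvd : (p:ℤ)^k ∣ 2*a*r₀ + b := by
    refine ⟨b*v, ?_⟩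
    have h9 : 2*a*r₀ + b = b*(1 - u*(2*a)) := by rw [hr0]; ring
    rw [h9, show (1:ℤ) - u*(2*a) = v*(p:ℤ)^k by linarith [huv]]
    ring
  set r : ℤ := (r₀ - 1) % (p:ℤ)^k + 1 with hrdef
  have hrsub : (p:ℤ)^k ∣ r - r₀ :=
    ⟨-((r₀ - 1) / (p:ℤ)^k), by rw [hrdef, Int.emod_def]; ring⟩
  have hrprop : 1 ≤ r ∧ r ≤ (p:ℤ)^k ∧ (p:ℤ)^k ∣ (2*a*r + b) := by
    refine ⟨by have := Int.emod_nonneg (r₀ - 1) (ne_of_gt hPk); omega,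
            by have := Int.emod_lt_of_pos (r₀ - 1) hPk; omega, ?_⟩
    have h10 : 2*a*r + b = (2*a*r₀ + b) + (2*a)*(r - r₀) := by ring
    rw [h10]
    exact dvd_add hr0dvd (hrsub.mul_left (2*a))
  -- part 2: set equality
  have part2 : ∀ r' : ℤ, (1 ≤ r' ∧ r' ≤ (p:ℤ)^k ∧ (p:ℤ)^k ∣ (2*a*r' + b)) →
      ({x : ℤ | 1 ≤ x ∧ x ≤ (p : ℤ)^e ∧ (p : ℤ)^e ∣ (a*x^2 + b*x + c)}
        = {x : ℤ | ∃ m : ℕ, m < p^j ∧ x = r' + (m : ℤ) * (p : ℤ)^k}) := by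
    rintro r' ⟨hr1, hr2, hr3⟩
    ext x
    simp only [Set.mem_setOf_eq]
    constructor
    · rintro ⟨hx1, hx2, hx3⟩
      have hlin : (p:ℤ)^k ∣ 2*a*x + b := (key x).mp hx3
      have hd : (p:ℤ)^k ∣ (2*a)*(x - r') := by
        have h7 := dvd_sub hlin hr3
        rwa [show (2*a*x+b) - (2*a*r'+b) = (2*a)*(x-r') by ring] at h7
      obtain ⟨t, ht⟩ : (p:ℤ)^k ∣ x - r' := hcop.dvd_of_dvd_mul_left hd
      have ht0 : 0 ≤ t := by
        by_contra hneg
        push_neg at hneg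
        have : (p:ℤ)^k * t ≤ (p:ℤ)^k * (-1) := by
          apply mul_le_mul_of_nonneg_left (by omega) (le_of_lt hPk)
        have hPke : (p:ℤ)^k ≤ (p:ℤ)^e := pow_le_pow_right₀ (by exact_mod_cast hp.one_lt.le) (by omega)
        nlinarith
      have htlt : t < (p:ℤ)^j := by
        by_contra hge
        push_neg at hge
        have : (p:ℤ)^k * (p:ℤ)^j ≤ (p:ℤ)^k * t :=
          mul_le_mul_of_nonneg_left hge (le_of_lt hPk)
        rw [← hPe] at this
        nlinarith
      refine ⟨t.toNat, ?_, ?_⟩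
      · have : (t.toNat : ℤ) < ((p^j : ℕ) : ℤ) := by
          push_cast
          rwa [Int.toNat_of_nonneg ht0]
        exact_mod_cast this
      · rw [Int.toNat_of_nonneg ht0]; linarith [ht]
    · rintro ⟨m, hm, rfl⟩
      have hm' : (m:ℤ) ≤ (p:ℤ)^j - 1 := by
        have : (m:ℤ) < ((p^j : ℕ) : ℤ) := by exact_mod_cast hm
        push_cast at this
        omega
      have hmnn : (0:ℤ) ≤ (m:ℤ) := Int.natCast_nonneg m
      refine ⟨by nlinarith, ?_, ?_⟩
      · have : r' + (m:ℤ) * (p:ℤ)^k ≤ (p:ℤ)^k + ((p:ℤ)^j - 1) * (p:ℤ)^k := by nlinarith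
        rw [hPe]; nlinarith
      · apply (key _).mpr
        have h11 : 2*a*(r' + (m:ℤ)*(p:ℤ)^k) + b = (2*a*r' + b) + (2*a*(m:ℤ))*(p:ℤ)^k := by ring
        rw [h11]
        exact dvd_add hr3 (Dvd.intro_left _ rfl)
  -- assemble
  refine ⟨⟨r, hrprop, fun y hy => huniq y r hy hrprop⟩, part2, ?_⟩
  rw [part2 r hrprop]
  have hsetfin : {x : ℤ | ∃ m : ℕ, m < p^j ∧ x = r + (m : ℤ) * (p : ℤ)^k}
      = ↑((Finset.range (p^j)).image (fun m : ℕ => r + (m:ℤ) * (p:ℤ)^k)) := by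
    ext x
    simp only [Set.mem_setOf_eq, Finset.coe_image, Set.mem_image, Finset.mem_coe,
      Finset.mem_range]
    constructor
    · rintro ⟨m, hm, rfl⟩; exact ⟨m, hm, rfl⟩
    · rintro ⟨m, hm, rfl⟩; exact ⟨m, hm, rfl⟩
  rw [hsetfin, Set.ncard_coe_finset, Finset.card_image_of_injective _ ?_,
    Finset.card_range]
  intro m₁ m₂ hmm
  simp only at hmm
  have : (m₁:ℤ) = (m₂:ℤ) := by
    have h12 : (m₁:ℤ) * (p:ℤ)^k = (m₂:ℤ) * (p:ℤ)^k := by linarith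
    exact mul_right_cancel₀ (ne_of_gt hPk) h12
  exact_mod_cast this
end

section
/- Let p be an odd prime not dividing a, f(x) = a x^2 + b x + c with D = b^2 - 4ac, v_p(D) even, (D_p/p) = 1 where D_p = D/p^{v_p(D)}, and e > v_p(D). Then the congruence f(x) ≡ 0 (mod p^e) has exactly 2·p^{v_p(D)/2} solutions in [1, p^e]. -/
/-!
Write `D = b² - 4ac = p^(2k) d` with `p ∤ d` and `e = 2k + m`, `m ≥ 1`. Since `2a` is a unit
modulo `p^e`, completing the square `4a·f(x) = (2ax + b)² - D` turns the roots of `f` modulo `p^e`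
into the square roots of `D` modulo `p^e`. Such a square root is `p^k z` with `z` determined
modulo `p^(k+m)` and `z² ≡ d (mod p^m)`. Hensel's lemma lifts the square root of `d` modulo `p`
to `ℤ_[p]`, and in the local ring `ℤ/p^m` (`p` odd) the roots of `z² = d` are exactly `±z₀`;
each of the two lifts to `p^k` classes modulo `p^(k+m)`, giving `2 p^k` roots.
-/

open Finset

theorem ZMod.ncard_Icc_filter_cast (n : ℕ) [NeZero n] (P : ZMod n → Prop) [DecidablePred P] :
    {x : ℤ | 1 ≤ x ∧ x ≤ n ∧ P x}.ncard = #{y | P y} := by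
  have hset : {x : ℤ | 1 ≤ x ∧ x ≤ n ∧ P x} = ({x ∈ Icc 1 (n : ℤ) | P x} : Finset ℤ) := by
    ext x; simp [and_assoc]
  rw [hset, Set.ncard_coe_finset]
  -- `y ↦ n - (-y).val` inverts the cast and takes values in `[1, n]` rather than `[0, n)`
  refine card_nbij' (fun x => (x : ZMod n)) (fun y => n - ((-y).val : ℤ)) ?_ ?_ ?_ ?_
  · intro x hx
    simp_all
  · intro y hy
    have := ZMod.val_lt (-y)
    simp only [coe_filter, mem_Icc, mem_univ, true_and] at hy ⊢
    exact ⟨⟨by omega, by omega⟩, by simpa using hy⟩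
  · intro x hx
    simp only [coe_filter, mem_Icc, Set.mem_ofPred_eq] at hx
    have := ZMod.val_lt (-(x : ZMod n))
    have hmod : ((n - ((-(x : ZMod n)).val : ℤ) : ℤ) : ZMod n) = x := by simp
    rw [ZMod.intCast_eq_intCast_iff_dvd_sub] at hmod
    exact (Int.eq_of_sub_eq_zero (Int.eq_zero_of_abs_lt_dvd hmod (by rw [abs_lt]; omega))).symm
  · intro y _
    simp

theorem quadratic_eq_zero_iff_sq_eq {R : Type*} [CommRing R] {a b c : R} (h2 : IsUnit (2 : R))
    (ha : IsUnit a) (x : R) :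
    a * x ^ 2 + b * x + c = 0 ↔ (2 * a * x + b) ^ 2 = b ^ 2 - 4 * a * c := by
  rw [← sub_eq_zero (a := (2 * a * x + b) ^ 2),
    show (2 * a * x + b) ^ 2 - (b ^ 2 - 4 * a * c) = 2 * 2 * a * (a * x ^ 2 + b * x + c) by ring,
    ((h2.mul h2).mul ha).mul_right_eq_zero]

theorem card_quadratic_eq_zero_eq_card_sq_eq {R : Type*} [CommRing R] [Fintype R] [DecidableEq R]
    {a b c : R} (h2 : IsUnit (2 : R)) (ha : IsUnit a) :
    #{x | a * x ^ 2 + b * x + c = 0} = #{y | y ^ 2 = b ^ 2 - 4 * a * c} :=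
  card_equiv ((Units.mulLeft (h2.mul ha).unit).trans (Equiv.addRight b)) fun x => by
    simp [quadratic_eq_zero_iff_sq_eq h2 ha]

theorem ncard_Icc_dvd_quadratic_eq_card_sq_eq (a b c : ℤ) (n : ℕ) [NeZero n]
    (h2 : IsUnit (2 : ZMod n)) (ha : IsUnit (a : ZMod n)) :
    {x : ℤ | 1 ≤ x ∧ x ≤ n ∧ (n : ℤ) ∣ a * x ^ 2 + b * x + c}.ncard =
      #{y : ZMod n | y ^ 2 = ((b ^ 2 - 4 * a * c : ℤ) : ZMod n)} := by
  have hroots : {x : ℤ | 1 ≤ x ∧ x ≤ n ∧ (n : ℤ) ∣ a * x ^ 2 + b * x + c} =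
      {x : ℤ | 1 ≤ x ∧ x ≤ n ∧ (a : ZMod n) * (x : ZMod n) ^ 2 + b * x + c = 0} := by
    ext x
    simp [← ZMod.intCast_zmod_eq_zero_iff_dvd]
  rw [hroots, ZMod.ncard_Icc_filter_cast n (fun y => (a : ZMod n) * y ^ 2 + b * y + c = 0),
    card_quadratic_eq_zero_eq_card_sq_eq h2 ha]
  push_cast
  rfl

theorem ZMod.card_sq_eq_sq_mul (q r : ℕ) [NeZero q] [NeZero r] (d : ℤ) :
    #{y : ZMod (q ^ 2 * r) | y ^ 2 = ((q ^ 2 * d : ℤ) : ZMod (q ^ 2 * r))} =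
      #{z : ZMod (q * r) | (ZMod.castHom (dvd_mul_left r q) (ZMod r) z) ^ 2 = d} := by
  have hq : (q : ℤ) ≠ 0 := Nat.cast_ne_zero.2 (NeZero.ne q)
  -- multiplication by `q`, well defined from `ZMod (q r)` to `ZMod (q² r)`
  let ψ : ZMod (q * r) →+ ZMod (q ^ 2 * r) :=
    ZMod.lift (q * r) ⟨(Int.castAddHom _).comp (.mulLeft (q : ℤ)),
      (ZMod.intCast_zmod_eq_zero_iff_dvd _ _).2 ⟨1, by push_cast; ring⟩⟩
  have hψ (t : ℤ) : ψ t = ((q * t : ℤ) : ZMod (q ^ 2 * r)) := ZMod.lift_coe _ _ t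
  have hmem (t : ℤ) : ψ t ^ 2 = ((q ^ 2 * d : ℤ) : ZMod (q ^ 2 * r)) ↔
      (ZMod.castHom (dvd_mul_left r q) (ZMod r) t) ^ 2 = d := by
    rw [hψ, map_intCast, ← Int.cast_pow, ← Int.cast_pow, ZMod.intCast_eq_intCast_iff_dvd_sub,
      ZMod.intCast_eq_intCast_iff_dvd_sub,
      show q ^ 2 * d - (q * t) ^ 2 = q ^ 2 * (d - t ^ 2) by ring]
    push_cast
    exact mul_dvd_mul_iff_left (pow_ne_zero 2 hq)
  symm
  refine card_nbij (fun z => ψ z) ?_ ?_ ?_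
  · intro z hz
    obtain ⟨t, rfl⟩ := ZMod.intCast_surjective z
    simp only [coe_filter, mem_univ, true_and, Set.mem_ofPred_eq] at hz ⊢
    exact (hmem t).2 hz
  · intro z _ z' _ h
    obtain ⟨t, rfl⟩ := ZMod.intCast_surjective z
    obtain ⟨t', rfl⟩ := ZMod.intCast_surjective z'
    simp only [hψ, ZMod.intCast_eq_intCast_iff_dvd_sub] at h ⊢
    push_cast at h ⊢
    rwa [← mul_sub, sq, mul_assoc, mul_dvd_mul_iff_left hq] at h
  · intro y hy
    obtain ⟨Y, rfl⟩ := ZMod.intCast_surjective y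
    simp only [coe_filter, mem_univ, true_and, Set.mem_ofPred_eq, ← Int.cast_pow,
      ZMod.intCast_eq_intCast_iff_dvd_sub] at hy
    have hqY : (q : ℤ) ^ 2 ∣ Y ^ 2 := by
      have := dvd_trans (⟨r, by push_cast; ring⟩ : (q : ℤ) ^ 2 ∣ ((q ^ 2 * r : ℕ) : ℤ)) hy
      simpa using (dvd_sub_comm.1 this |>.add (dvd_mul_right _ d))
    obtain ⟨t, rfl⟩ := (Int.pow_dvd_pow_iff two_ne_zero).1 hqY
    refine ⟨t, ?_, hψ t⟩
    simp only [coe_filter, mem_univ, true_and, Set.mem_ofPred_eq]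
    rwa [← hmem, hψ, ← Int.cast_pow, ZMod.intCast_eq_intCast_iff_dvd_sub]

theorem AddMonoidHom.card_filter_comp_mul_card {G H : Type*} [AddGroup G] [Fintype G]
    [AddGroup H] [Fintype H] [DecidableEq H] (f : G →+ H) (hf : Function.Surjective f)
    (P : H → Prop) [DecidablePred P] :
    #{g | P (f g)} * Fintype.card H = #{h | P h} * Fintype.card G := by
  have hfiber (h : H) : #{g | f g = h} = #{g | f g = 0} :=
    AddMonoidHom.card_fiber_eq_of_mem_range f (hf h) (hf 0)
  have hcount (Q : H → Prop) [DecidablePred Q] :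
      #{g | Q (f g)} = #{h | Q h} * #{g | f g = 0} := by
    rw [card_eq_sum_card_fiberwise (f := f) (t := {h | Q h}) (by simp [Set.MapsTo]),
      ← smul_eq_mul, ← sum_const]
    refine sum_congr rfl fun h hh => ?_
    rw [← hfiber h, filter_filter]
    exact congrArg card (filter_congr fun g _ => by simp_all)
  have hG := hcount fun _ => True
  simp only [filter_true, card_univ] at hG
  rw [hcount, hG, mul_comm (Fintype.card H), mul_assoc]

theorem ZMod.card_filter_castHom (q r : ℕ) [NeZero q] [NeZero r] (P : ZMod r → Prop)
    [DecidablePred P] :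
    #{z : ZMod (q * r) | P (ZMod.castHom (dvd_mul_left r q) (ZMod r) z)} = q * #{w | P w} := by
  have := (ZMod.castHom (dvd_mul_left r q) (ZMod r)).toAddMonoidHom.card_filter_comp_mul_card
    (ZMod.ringHom_surjective _) P
  simp only [ZMod.card] at this
  exact Nat.eq_of_mul_eq_mul_right (Nat.pos_of_neZero r) (this.trans (by ring))

theorem IsLocalRing.card_sq_eq_sq {R : Type*} [CommRing R] [IsLocalRing R] [Fintype R]
    [DecidableEq R] (h2 : IsUnit (2 : R)) {x : R} (hx : IsUnit x) : #{y | y ^ 2 = x ^ 2} = 2 := by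
  have h2x : IsUnit (2 * x) := h2.mul hx
  have hroots : ({y | y ^ 2 = x ^ 2} : Finset R) = {x, -x} := by
    ext y
    simp only [mem_filter, mem_univ, true_and, mem_insert, mem_singleton]
    refine ⟨fun hy => ?_, by rintro (rfl | rfl) <;> ring⟩
    -- `(y + x) + (x - y) = 2x` is a unit, so one of the two factors is a unit
    rcases isUnit_or_isUnit_of_isUnit_add (a := y + x) (b := x - y) (by convert h2x using 1; ring)
      with hu | hu
    · left; exact sub_eq_zero.1 (hu.mul_left_eq_zero.1 (by linear_combination hy))
    · right; exact eq_neg_of_add_eq_zero_left (hu.mul_right_eq_zero.1 (by linear_combination -hy))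
  rw [hroots, card_pair]
  intro h
  exact h2x.ne_zero (by linear_combination h)

theorem PadicInt.isUnit_intCast {p : ℕ} [Fact p.Prime] {x : ℤ} (hx : ¬ (p : ℤ) ∣ x) :
    IsUnit (x : ℤ_[p]) :=
  isUnit_iff.2 (le_antisymm (norm_le_one _) (not_lt.1 (mt (norm_int_lt_one_iff_dvd x).1 hx)))

theorem PadicInt.exists_sq_eq_of_isSquare_toZMod {p : ℕ} [Fact p.Prime]
    (h2 : IsUnit (2 : ℤ_[p])) {x : ℤ_[p]} (hx : IsUnit x) (hsq : IsSquare (toZMod x)) :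
    ∃ z : ℤ_[p], z ^ 2 = x := by
  obtain ⟨r, hr⟩ := hsq
  obtain ⟨s, rfl⟩ := ZMod.ringHom_surjective (toZMod : ℤ_[p] →+* ZMod p) r
  have hs : IsUnit s := by
    rw [← isUnit_map_iff (toZMod : ℤ_[p] →+* ZMod p), ← isUnit_mul_self_iff, ← hr]
    exact hx.map _
  have hsx : ‖s ^ 2 - x‖ < 1 := by
    rw [← mem_nonunits, ← IsLocalRing.mem_maximalIdeal, ← ker_toZMod, RingHom.mem_ker, map_sub,
      map_pow, hr, sq, sub_self]
  have hnorm : ‖(Polynomial.X ^ 2 - Polynomial.C x).aeval s‖ <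
      ‖(Polynomial.derivative (Polynomial.X ^ 2 - Polynomial.C x)).aeval s‖ ^ 2 := by
    have hder : (Polynomial.derivative (Polynomial.X ^ 2 - Polynomial.C x)).aeval s = 2 * s := by
      simp [one_add_one_eq_two]
    rw [hder, isUnit_iff.1 (h2.mul hs), one_pow]
    simpa using hsx
  obtain ⟨z, hz, -⟩ := hensels_lemma hnorm
  exact ⟨z, by simpa [sub_eq_zero] using hz⟩

theorem PadicInt.card_sq_eq_toZModPow {p : ℕ} [Fact p.Prime] {m : ℕ} (hm : m ≠ 0)
    (h2 : IsUnit (2 : ℤ_[p])) {x : ℤ_[p]} (hx : IsUnit x) (hsq : IsSquare (toZMod x)) :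
    #{w : ZMod (p ^ m) | w ^ 2 = toZModPow m x} = 2 := by
  have : Nontrivial (ZMod (p ^ m)) :=
    ZMod.nontrivial_iff.2 (by simp [hm, (Fact.out : p.Prime).ne_one])
  have : IsLocalRing (ZMod (p ^ m)) :=
    IsLocalRing.of_surjective' (toZModPow m) (ZMod.ringHom_surjective _)
  obtain ⟨z, rfl⟩ := exists_sq_eq_of_isSquare_toZMod h2 hx hsq
  rw [map_pow]
  refine IsLocalRing.card_sq_eq_sq (by simpa only [map_ofNat] using h2.map (toZModPow m)) ?_
  exact ((isUnit_pow_iff two_ne_zero).1 hx).map _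

/-- Let `p` be an odd prime with `p ∤ a`, `D = b² - 4ac`, `v = v_p(D)` even,
`D_p = D/pᵛ` a quadratic residue mod `p`, and `e > v`. Then
`f(x) ≡ 0 (mod pᵉ)` has exactly `2·p^{v/2}` solutions in `[1, pᵉ]`. -/
theorem count_solutions_large_e (a b c : ℤ) (p : ℕ) (hp : p.Prime) (hodd : p ≠ 2)
    (hpa : ¬ (p : ℤ) ∣ a) (v e : ℕ)
    (hv : (p : ℤ)^v ∣ (b^2 - 4*a*c)) (hv' : ¬ (p : ℤ)^(v+1) ∣ (b^2 - 4*a*c))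
    (hveven : Even v)
    (hres : IsSquare ((((b^2 - 4*a*c) / (p : ℤ)^v : ℤ) : ZMod p)))
    (he : v < e) :
    {x : ℤ | 1 ≤ x ∧ x ≤ (p : ℤ)^e ∧
      (p : ℤ)^e ∣ (a*x^2 + b*x + c)}.ncard = 2 * p^(v/2) := by
  have : Fact p.Prime := ⟨hp⟩
  have hp2 : ¬ (p : ℤ) ∣ 2 := fun h =>
    hodd ((Nat.prime_dvd_prime_iff_eq hp Nat.prime_two).1 (by exact_mod_cast h))
  obtain ⟨k, rfl⟩ := hveven
  obtain ⟨m, rfl⟩ : ∃ m, e = k + k + m := ⟨e - (k + k), by omega⟩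
  set d := (b ^ 2 - 4 * a * c) / (p : ℤ) ^ (k + k) with hd
  have hD : b ^ 2 - 4 * a * c = ((p ^ k : ℕ) : ℤ) ^ 2 * d := by
    rw [← Int.mul_ediv_cancel' hv, ← hd]
    push_cast; ring
  have hpd : ¬ (p : ℤ) ∣ d := fun ⟨t, ht⟩ => hv' ⟨t, by rw [hD, ht]; push_cast; ring⟩
  have : NeZero (p ^ k) := ⟨pow_ne_zero _ hp.ne_zero⟩
  have : NeZero (p ^ m) := ⟨pow_ne_zero _ hp.ne_zero⟩
  have hunit (x : ℤ) (hx : ¬ (p : ℤ) ∣ x) : IsUnit (x : ZMod ((p ^ k) ^ 2 * p ^ m)) := by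
    have hcop := (Nat.prime_iff_prime_int.1 hp).coprime_iff_not_dvd.2 hx
    exact (ZMod.coe_int_isUnit_iff_isCoprime _ _).2 (by
      simpa using (hcop.pow_left.pow_left).mul_left hcop.pow_left)
  have hd_cast : (d : ZMod (p ^ m)) = PadicInt.toZModPow m (d : ℤ_[p]) := (map_intCast _ _).symm
  rw [show (p : ℤ) ^ (k + k + m) = ((p ^ k) ^ 2 * p ^ m : ℕ) by push_cast; ring,
    ncard_Icc_dvd_quadratic_eq_card_sq_eq a b c _ (by simpa using hunit 2 hp2) (hunit a hpa), hD,
    ZMod.card_sq_eq_sq_mul, ZMod.card_filter_castHom (p ^ k) (p ^ m) (fun w => w ^ 2 = d), hd_cast,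
    PadicInt.card_sq_eq_toZModPow (by omega) (by simpa using PadicInt.isUnit_intCast hp2)
      (PadicInt.isUnit_intCast hpd) (by rwa [map_intCast]),
    show (k + k) / 2 = k by omega, mul_comm]
end

section
/- With d_{p^e} the minimal distance among roots of f(x) ≡ 0 (mod p^e): if S(f, p^e) is nonempty, then there exists a positive integer n with p^e | f(n) and p^e | f(n + d_{p^e}). Moreover, if d_{p^e} < d_{p^{e+1}}, then there exists a positive integer m with v_p(f(m)) = e exactly. -/
/-- The set of solutions of `f(x) ≡ 0 (mod pᵉ)` in `[1, pᵉ]`. -/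
def solSet (f : ℤ → ℤ) (p e : ℕ) : Set ℤ :=
  {x | 1 ≤ x ∧ x ≤ (p : ℤ)^e ∧ (p : ℤ)^e ∣ f x}

/-- The representative `⟨y⟩ₘ ∈ [1, m]` of `y` modulo `m`. -/
def rep (m y : ℤ) : ℤ := if y % m = 0 then m else y % m

/-- The distance between two roots modulo `m`:
`min(⟨x₁ - x₂⟩ₘ, ⟨x₂ - x₁⟩ₘ)` (equal to `m` when `x₁ = x₂`). -/
def pairDist (m x₁ x₂ : ℤ) : ℤ := min (rep m (x₁ - x₂)) (rep m (x₂ - x₁))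

/-- The minimal distance `d_{pᵉ}` among the roots of `f(x) ≡ 0 (mod pᵉ)`:
`1` for `e = 0`, the minimum of all pairwise distances when the solution set
is nonempty, and `∞` (the infimum of the empty set) when it is empty. -/
noncomputable def minDist (f : ℤ → ℤ) (p e : ℕ) : ℕ∞ :=
  if e = 0 then 1
  else sInf {d : ℕ∞ | ∃ x₁ ∈ solSet f p e, ∃ x₂ ∈ solSet f p e,
    d = ((pairDist ((p : ℤ)^e) x₁ x₂).toNat : ℕ∞)}

lemma rep_pos {m : ℤ} (hm : 0 < m) (y : ℤ) : 0 < rep m y := by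
  unfold rep
  split
  · exact hm
  · rename_i h
    have := Int.emod_nonneg y (ne_of_gt hm)
    omega

lemma rep_le {m : ℤ} (hm : 0 < m) (y : ℤ) : rep m y ≤ m := by
  unfold rep
  split
  · exact le_refl m
  · have := Int.emod_lt_of_pos y hm; omega

lemma dvd_sub_rep (m y : ℤ) : m ∣ y - rep m y := by
  unfold rep
  split
  · rename_i h
    exact dvd_sub (Int.dvd_of_emod_eq_zero h) (dvd_refl m)
  · exact ⟨y / m, by rw [Int.emod_def]; ring⟩

lemma rep_congr {m x y : ℤ} (h : m ∣ x - y) : rep m x = rep m y := by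
  have h2 : x % m = y % m := Int.ModEq.symm (Int.modEq_iff_dvd.mpr h)
  unfold rep
  rw [h2]

lemma quad_congr {m x : ℤ} (a b c : ℤ) {y : ℤ} (h : m ∣ x - y)
    (hy : m ∣ a*y^2 + b*y + c) : m ∣ a*x^2 + b*x + c := by
  have hx : a*x^2 + b*x + c = (a*y^2 + b*y + c) + (x - y)*(a*(x+y)+b) := by ring
  rw [hx]
  exact dvd_add hy (h.mul_right _)

lemma pairDist_pos {m : ℤ} (hm : 0 < m) (x y : ℤ) : 0 < pairDist m x y :=
  lt_min (rep_pos hm _) (rep_pos hm _)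

lemma pairDist_le {m : ℤ} (hm : 0 < m) (x y : ℤ) : pairDist m x y ≤ m :=
  le_trans (min_le_left _ _) (rep_le hm _)

lemma sInf_mem_enat {S : Set ℕ∞} (hS : ∀ s ∈ S, ∃ k : ℕ, s = (k : ℕ∞))
    (hne : S.Nonempty) : sInf S ∈ S := by
  set T : Set ℕ := {k : ℕ | (k : ℕ∞) ∈ S} with hT
  have hTne : T.Nonempty := by
    obtain ⟨s, hs⟩ := hne
    obtain ⟨k, rfl⟩ := hS s hs
    exact ⟨k, hs⟩
  have hmem : ((sInf T : ℕ) : ℕ∞) ∈ S := Nat.sInf_mem hTne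
  have heq : sInf S = ((sInf T : ℕ) : ℕ∞) := by
    refine le_antisymm (sInf_le hmem) (le_sInf ?_)
    intro s hs
    obtain ⟨k, rfl⟩ := hS s hs
    exact_mod_cast Nat.sInf_le hs
  rw [heq]; exact hmem

lemma exists_pair (a b c : ℤ) (p : ℕ) (hp : 0 < p) (e : ℕ) (he : e ≠ 0)
    (hne : (solSet (fun x => a*x^2 + b*x + c) p e).Nonempty) (d : ℕ)
    (hd : minDist (fun x => a*x^2 + b*x + c) p e = (d : ℕ∞)) :
    ∃ x₁ ∈ solSet (fun x => a*x^2 + b*x + c) p e,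
      ∃ x₂ ∈ solSet (fun x => a*x^2 + b*x + c) p e,
        (d : ℤ) = pairDist ((p : ℤ)^e) x₁ x₂ := by
  rw [minDist, if_neg he] at hd
  have hm : (0:ℤ) < (p:ℤ)^e := by positivity
  set S : Set ℕ∞ := {d : ℕ∞ | ∃ x₁ ∈ solSet (fun x => a*x^2 + b*x + c) p e,
    ∃ x₂ ∈ solSet (fun x => a*x^2 + b*x + c) p e,
    d = ((pairDist ((p : ℤ)^e) x₁ x₂).toNat : ℕ∞)} with hSdef
  have hS : ∀ s ∈ S, ∃ k : ℕ, s = (k : ℕ∞) := by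
    rintro s ⟨x₁, h₁, x₂, h₂, rfl⟩
    exact ⟨_, rfl⟩
  have hSne : S.Nonempty := by
    obtain ⟨x, hx⟩ := hne
    exact ⟨_, ⟨x, hx, x, hx, rfl⟩⟩
  have := sInf_mem_enat hS hSne
  rw [hd] at this
  obtain ⟨x₁, h₁, x₂, h₂, heq⟩ := this
  refine ⟨x₁, h₁, x₂, h₂, ?_⟩
  have hdk : d = (pairDist ((p : ℤ)^e) x₁ x₂).toNat := by exact_mod_cast heq
  rw [hdk, Int.toNat_of_nonneg (pairDist_pos hm x₁ x₂).le]

lemma key (a b c m x₁ x₂ : ℤ) (h₁s : 1 ≤ x₁) (h₂s : 1 ≤ x₂)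
    (h₁ : m ∣ a*x₁^2 + b*x₁ + c) (h₂ : m ∣ a*x₂^2 + b*x₂ + c) :
    ∃ n : ℤ, 1 ≤ n ∧ m ∣ (a*n^2 + b*n + c) ∧
      m ∣ (a*(n + pairDist m x₁ x₂)^2 + b*(n + pairDist m x₁ x₂) + c) := by
  rcases le_total (rep m (x₁ - x₂)) (rep m (x₂ - x₁)) with h | h
  · refine ⟨x₂, h₂s, h₂, ?_⟩
    have hpd : pairDist m x₁ x₂ = rep m (x₁ - x₂) := min_eq_left h
    rw [hpd]
    refine quad_congr a b c ?_ h₁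
    have hds := dvd_sub_rep m (x₁ - x₂)
    have h2 : (x₂ + rep m (x₁ - x₂)) - x₁ = -((x₁ - x₂) - rep m (x₁ - x₂)) := by ring
    rw [h2]; exact dvd_neg.mpr hds
  · refine ⟨x₁, h₁s, h₁, ?_⟩
    have hpd : pairDist m x₁ x₂ = rep m (x₂ - x₁) := min_eq_right h
    rw [hpd]
    refine quad_congr a b c ?_ h₂
    have hds := dvd_sub_rep m (x₂ - x₁)
    have h2 : (x₁ + rep m (x₂ - x₁)) - x₂ = -((x₂ - x₁) - rep m (x₂ - x₁)) := by ring
    rw [h2]; exact dvd_neg.mpr hds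

/-- If `S(f, pᵉ)` is nonempty then there is `n ≥ 1` with `pᵉ ∣ f(n)` and
`pᵉ ∣ f(n + d_{pᵉ})`; moreover if `d_{pᵉ} < d_{pᵉ⁺¹}` then there is `m ≥ 1`
with `v_p(f(m)) = e` exactly. -/
theorem minDist_realized (a b c : ℤ) (p : ℕ) (hp : p.Prime) (e : ℕ) :
    ((solSet (fun x => a*x^2 + b*x + c) p e).Nonempty →
      ∀ d : ℕ, minDist (fun x => a*x^2 + b*x + c) p e = (d : ℕ∞) →
        ∃ n : ℤ, 1 ≤ n ∧ (p : ℤ)^e ∣ (a*n^2 + b*n + c) ∧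
          (p : ℤ)^e ∣ (a*(n + d)^2 + b*(n + d) + c)) ∧
    (minDist (fun x => a*x^2 + b*x + c) p e
        < minDist (fun x => a*x^2 + b*x + c) p (e+1) →
      ∃ m : ℤ, 1 ≤ m ∧ (p : ℤ)^e ∣ (a*m^2 + b*m + c) ∧
        ¬ (p : ℤ)^(e+1) ∣ (a*m^2 + b*m + c)) := by
  have hppos : 0 < p := hp.pos
  constructor
  · intro hne d hd
    by_cases he : e = 0
    · subst he
      exact ⟨1, le_refl 1, by simp, by simp⟩
    · obtain ⟨x₁, h₁, x₂, h₂, hdp⟩ := exists_pair a b c p hppos e he hne d hd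
      simp only [solSet, Set.mem_setOf_eq] at h₁ h₂
      obtain ⟨n, hn1, hn, hnd⟩ :=
        key a b c ((p:ℤ)^e) x₁ x₂ h₁.1 h₂.1 h₁.2.2 h₂.2.2
      exact ⟨n, hn1, hn, by rw [hdp]; exact hnd⟩
  · intro hlt
    have hstep : ∃ (n : ℤ) (d : ℕ), 1 ≤ n ∧ 1 ≤ d ∧ (d : ℤ) ≤ (p:ℤ)^e ∧
        (p:ℤ)^e ∣ (a*n^2 + b*n + c) ∧
        (p:ℤ)^e ∣ (a*(n + d)^2 + b*(n + d) + c) ∧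
        minDist (fun x => a*x^2 + b*x + c) p e = ((d : ℕ) : ℕ∞) := by
      by_cases he : e = 0
      · subst he
        refine ⟨1, 1, le_refl 1, le_refl 1, by simp, by simp, by simp, ?_⟩
        rw [minDist, if_pos rfl]; simp
      · have hne : (solSet (fun x => a*x^2 + b*x + c) p e).Nonempty := by
          by_contra h
          rw [Set.not_nonempty_iff_eq_empty] at h
          have hempty : {d : ℕ∞ | ∃ x₁ ∈ solSet (fun x => a*x^2 + b*x + c) p e,
              ∃ x₂ ∈ solSet (fun x => a*x^2 + b*x + c) p e,
              d = ((pairDist ((p : ℤ)^e) x₁ x₂).toNat : ℕ∞)} = ∅ := by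
            rw [Set.eq_empty_iff_forall_notMem]
            rintro s ⟨x₁, h₁, _⟩
            rw [h] at h₁
            exact h₁
          have htop : minDist (fun x => a*x^2 + b*x + c) p e = ⊤ := by
            rw [minDist, if_neg he, hempty, sInf_empty]
          rw [htop] at hlt
          exact not_top_lt hlt
        have hne' : minDist (fun x => a*x^2 + b*x + c) p e ≠ ⊤ := hlt.ne_top
        obtain ⟨d, hd⟩ := WithTop.ne_top_iff_exists.mp hne'
        obtain ⟨x₁, h₁, x₂, h₂, hdp⟩ :=
          exists_pair a b c p hppos e he hne d hd.symm
        have hm : (0:ℤ) < (p:ℤ)^e := by positivity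
        simp only [solSet, Set.mem_setOf_eq] at h₁ h₂
        obtain ⟨n, hn1, hn, hnd⟩ :=
          key a b c ((p:ℤ)^e) x₁ x₂ h₁.1 h₂.1 h₁.2.2 h₂.2.2
        have hd1 : 1 ≤ d := by
          have := pairDist_pos hm x₁ x₂
          rw [← hdp] at this
          exact_mod_cast this
        have hdle : (d : ℤ) ≤ (p:ℤ)^e := by
          rw [hdp]; exact pairDist_le hm x₁ x₂
        exact ⟨n, d, hn1, hd1, hdle, hn, by rw [hdp]; exact hnd, hd.symm⟩
    obtain ⟨n, d, hn1, hd1, hdle, hfn, hfnd, hmind⟩ := hstep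
    by_contra hcon
    push_neg at hcon
    have hn' := hcon n hn1 hfn
    have hnd' := hcon (n + d) (by have : (0:ℤ) ≤ (d:ℤ) := Int.natCast_nonneg d; linarith) hfnd
    set M : ℤ := (p:ℤ)^(e+1) with hMdef
    have hM : (0:ℤ) < M := by positivity
    set y₁ := rep M n with hy₁def
    set y₂ := rep M (n + d) with hy₂def
    have hy₁d : M ∣ y₁ - n := by
      have := dvd_sub_rep M n
      have h2 : y₁ - n = -(n - rep M n) := by rw [hy₁def]; ring
      rw [h2]; exact dvd_neg.mpr this
    have hy₂d : M ∣ y₂ - (n + d) := by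
      have := dvd_sub_rep M (n + d)
      have h2 : y₂ - (n + d) = -((n + d) - rep M (n + d)) := by rw [hy₂def]; ring
      rw [h2]; exact dvd_neg.mpr this
    have hy₁ : y₁ ∈ solSet (fun x => a*x^2 + b*x + c) p (e+1) := by
      refine ⟨?_, rep_le hM n, quad_congr a b c hy₁d hn'⟩
      have := rep_pos hM n; omega
    have hy₂ : y₂ ∈ solSet (fun x => a*x^2 + b*x + c) p (e+1) := by
      refine ⟨?_, rep_le hM (n + d), quad_congr a b c hy₂d hnd'⟩
      have := rep_pos hM (n + d); omega
    have hdiff : M ∣ (y₂ - y₁) - (d : ℤ) := by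
      have h2 : (y₂ - y₁) - (d : ℤ) = (y₂ - (n + d)) - (y₁ - n) := by ring
      rw [h2]; exact dvd_sub hy₂d hy₁d
    have hpe_lt : (p:ℤ)^e < M := by
      rw [hMdef]
      exact pow_lt_pow_right₀ (by exact_mod_cast hp.one_lt) (Nat.lt_succ_self e)
    have hrepd : rep M ((d:ℤ)) = (d : ℤ) := by
      have h0 : (d:ℤ) % M = (d:ℤ) :=
        Int.emod_eq_of_lt (by exact_mod_cast Nat.zero_le d) (lt_of_le_of_lt hdle hpe_lt)
      unfold rep
      rw [h0, if_neg (by exact_mod_cast Nat.one_le_iff_ne_zero.mp hd1 ∘ fun h => by exact_mod_cast h)]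
    have hpd_le : pairDist M y₂ y₁ ≤ (d : ℤ) := by
      refine le_trans (min_le_left _ _) ?_
      rw [rep_congr hdiff, hrepd]
    have hmem : (((pairDist M y₂ y₁).toNat : ℕ) : ℕ∞) ∈
        {d : ℕ∞ | ∃ x₁ ∈ solSet (fun x => a*x^2 + b*x + c) p (e+1),
          ∃ x₂ ∈ solSet (fun x => a*x^2 + b*x + c) p (e+1),
          d = ((pairDist ((p : ℤ)^(e+1)) x₁ x₂).toNat : ℕ∞)} :=
      ⟨y₂, hy₂, y₁, hy₁, rfl⟩
    have hle : minDist (fun x => a*x^2 + b*x + c) p (e+1) ≤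
        (((pairDist M y₂ y₁).toNat : ℕ) : ℕ∞) := by
      rw [minDist, if_neg (Nat.succ_ne_zero e)]
      exact sInf_le hmem
    have hle2 : (((pairDist M y₂ y₁).toNat : ℕ) : ℕ∞) ≤ (d : ℕ∞) :=
      Nat.cast_le.mpr (Int.toNat_le.mpr hpd_le)
    have : minDist (fun x => a*x^2 + b*x + c) p (e+1) ≤
        minDist (fun x => a*x^2 + b*x + c) p e := by
      rw [hmind]; exact hle.trans hle2
    exact absurd hlt (not_lt.mpr this)
end

section
/- Let f(x) = a x^2 + b x + c be primitive and p a prime with p | a. If p | b, then d_{p^e} = ∞ (no solutions of f(x) ≡ 0 mod p^e) for every e ≥ 1; if p ∤ b, then d_{p^e} = p^e for all e ≥ 1. -/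
theorem rep_mem_Icc {m : ℤ} (hm : 0 < m) (y : ℤ) : rep m y ∈ Set.Icc 1 m := by
  unfold rep
  split_ifs with h
  · exact ⟨hm, le_rfl⟩
  · exact ⟨by have := Int.emod_nonneg y hm.ne'; omega, (Int.emod_lt_of_pos y hm).le⟩

theorem dvd_rep_sub (m y : ℤ) : m ∣ rep m y - y := by
  unfold rep
  split_ifs with h
  · exact dvd_sub dvd_rfl (Int.dvd_of_emod_eq_zero h)
  · exact ⟨-(y / m), by rw [Int.emod_def]; ring⟩

theorem pairDist_self (m x : ℤ) : pairDist m x x = m := by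
  simp [pairDist, rep]

theorem eq_rep_of_mem_Icc_of_dvd_sub {m x y : ℤ} (hy : y ∈ Set.Icc 1 m) (hxy : m ∣ y - x) :
    y = rep m x := by
  have hm : 0 < m := (zero_lt_one.trans_le hy.1).trans_le hy.2
  have hx := rep_mem_Icc hm x
  have hdvd : m ∣ y - rep m x := by
    simpa using dvd_sub hxy (dvd_rep_sub m x)
  have hlt : |y - rep m x| < m := abs_lt.mpr ⟨by linarith [hy.1, hx.2], by linarith [hy.2, hx.1]⟩
  exact sub_eq_zero.mp (Int.eq_zero_of_abs_lt_dvd hdvd hlt)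

section minDist

variable {f : ℤ → ℤ} {p e : ℕ}

theorem minDist_eq_top_of_forall_not_dvd (he : e ≠ 0) (h : ∀ x, ¬ (p : ℤ) ^ e ∣ f x) :
    minDist f p e = ⊤ := by
  have hsol : solSet f p e = ∅ := Set.eq_empty_of_forall_notMem fun x hx => h x hx.2.2
  simp [minDist, he, hsol]

theorem solSet_eq_singleton_rep (hp : 0 < p) {x : ℤ}
    (h : ∀ y, (p : ℤ) ^ e ∣ f y ↔ (p : ℤ) ^ e ∣ y - x) :
    solSet f p e = {rep ((p : ℤ) ^ e) x} := by
  have hm : (0 : ℤ) < (p : ℤ) ^ e := pow_pos (by exact_mod_cast hp) e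
  ext y
  constructor
  · rintro ⟨hy₁, hy₂, hy⟩
    exact eq_rep_of_mem_Icc_of_dvd_sub ⟨hy₁, hy₂⟩ ((h y).mp hy)
  · rintro rfl
    obtain ⟨h₁, h₂⟩ := rep_mem_Icc hm x
    exact ⟨h₁, h₂, (h _).mpr (dvd_rep_sub _ x)⟩

theorem minDist_eq_pow_of_solSet_eq_singleton (he : e ≠ 0) {x₀ : ℤ}
    (h : solSet f p e = {x₀}) : minDist f p e = ((p ^ e : ℕ) : ℕ∞) := by
  simp only [minDist, he, h, pairDist_self, if_false, Set.mem_singleton_iff, exists_eq_left,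
    Set.ofPred_eq_eq_singleton, sInf_singleton]
  norm_cast

end minDist

section quadratic

theorem Prime.pow_dvd_sub_of_pow_dvd_sub_quadratic {R : Type*} [CommRing R] [IsDomain R]
    {p a b c x y : R} (hp : Prime p) (hpa : p ∣ a) (hpb : ¬ p ∣ b) (e : ℕ)
    (h : p ^ e ∣ (a * x ^ 2 + b * x + c) - (a * y ^ 2 + b * y + c)) : p ^ e ∣ x - y := by
  have hunit : ¬ p ∣ a * (x + y) + b := fun hdvd =>
    hpb (by simpa using dvd_sub hdvd (hpa.mul_right (x + y)))
  refine hp.pow_dvd_of_dvd_mul_right e hunit ?_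
  convert h using 1
  ring

theorem Prime.pow_dvd_quadratic_iff_dvd_sub {R : Type*} [CommRing R] [IsDomain R]
    {p a b c x : R} (hp : Prime p) (hpa : p ∣ a) (hpb : ¬ p ∣ b) {e : ℕ}
    (hx : p ^ e ∣ a * x ^ 2 + b * x + c) (y : R) :
    p ^ e ∣ a * y ^ 2 + b * y + c ↔ p ^ e ∣ y - x := by
  constructor
  · intro hy
    exact hp.pow_dvd_sub_of_pow_dvd_sub_quadratic hpa hpb e (dvd_sub hy hx)
  · intro hyx
    convert dvd_add hx (hyx.mul_right (a * (y + x) + b)) using 1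
    ring

variable {a b c : ℤ} {p : ℕ}

theorem not_dvd_quadratic_of_gcd_eq_one {q : ℤ} (hq : ¬ IsUnit q)
    (hprim : Int.gcd a (Int.gcd b c) = 1) (hqa : q ∣ a) (hqb : q ∣ b) (x : ℤ) :
    ¬ q ∣ a * x ^ 2 + b * x + c := by
  intro hq_dvd
  have hqc : q ∣ c :=
    (dvd_add_right (dvd_add (hqa.mul_right (x ^ 2)) (hqb.mul_right x))).mp hq_dvd
  have hq_one : q ∣ ((Int.gcd a (Int.gcd b c) : ℕ) : ℤ) :=
    Int.dvd_coe_gcd hqa (Int.dvd_coe_gcd hqb hqc)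
  rw [hprim, Nat.cast_one] at hq_one
  exact hq (isUnit_of_dvd_one hq_one)

theorem exists_pow_dvd_quadratic (hp : p.Prime) (hpa : (p : ℤ) ∣ a) (hpb : ¬ (p : ℤ) ∣ b)
    (e : ℕ) : ∃ x : ℤ, (p : ℤ) ^ e ∣ a * x ^ 2 + b * x + c := by
  have : NeZero (p ^ e) := ⟨pow_ne_zero e hp.ne_zero⟩
  let g : ZMod (p ^ e) → ZMod (p ^ e) := fun z => a * z ^ 2 + b * z + c
  have hg : Function.Injective g := by
    intro z w hzw
    obtain ⟨x, rfl⟩ := ZMod.intCast_surjective z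
    obtain ⟨y, rfl⟩ := ZMod.intCast_surjective w
    replace hzw :
        ((a * x ^ 2 + b * x + c : ℤ) : ZMod (p ^ e)) = (a * y ^ 2 + b * y + c : ℤ) := by
      push_cast
      exact hzw
    rw [ZMod.intCast_eq_intCast_iff_dvd_sub] at hzw ⊢
    push_cast at hzw ⊢
    exact (Nat.prime_iff_prime_int.mp hp).pow_dvd_sub_of_pow_dvd_sub_quadratic hpa hpb e hzw
  obtain ⟨z, hz⟩ := (Finite.injective_iff_surjective.mp hg) 0
  obtain ⟨x, rfl⟩ := ZMod.intCast_surjective z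
  refine ⟨x, ?_⟩
  exact_mod_cast (ZMod.intCast_zmod_eq_zero_iff_dvd _ (p ^ e)).mp (by push_cast; exact hz)

end quadratic

/-- For primitive `f(x) = ax² + bx + c` and a prime `p ∣ a`: if `p ∣ b` then
`d_{pᵉ} = ∞` for all `e ≥ 1`; if `p ∤ b` then `d_{pᵉ} = pᵉ` for all `e ≥ 1`. -/
theorem minDist_p_dvd_a (a b c : ℤ) (hprim : Int.gcd a (Int.gcd b c) = 1)
    (p : ℕ) (hp : p.Prime) (hpa : (p : ℤ) ∣ a) :
    (((p : ℤ) ∣ b) → ∀ e : ℕ, 1 ≤ e →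
      minDist (fun x => a*x^2 + b*x + c) p e = ⊤) ∧
    ((¬ (p : ℤ) ∣ b) → ∀ e : ℕ, 1 ≤ e →
      minDist (fun x => a*x^2 + b*x + c) p e = ((p^e : ℕ) : ℕ∞)) := by
  have hpZ : Prime (p : ℤ) := Nat.prime_iff_prime_int.mp hp
  refine ⟨fun hpb e he => ?_, fun hpb e he => ?_⟩
  · refine minDist_eq_top_of_forall_not_dvd (by omega) fun x hx => ?_
    exact not_dvd_quadratic_of_gcd_eq_one hpZ.not_isUnit hprim hpa hpb x
      ((dvd_pow_self _ (by omega)).trans hx)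
  · obtain ⟨x, hx⟩ := exists_pow_dvd_quadratic (c := c) hp hpa hpb e
    exact minDist_eq_pow_of_solSet_eq_singleton (by omega)
      (solSet_eq_singleton_rep hp.pos (hpZ.pow_dvd_quadratic_iff_dvd_sub hpa hpb hx))
end

section
/- Let p be an odd prime not dividing a and 1 ≤ e ≤ v_p(D), where D = b^2 - 4ac. Then d_{p^e} = p^{⌈e/2⌉}. Moreover, for e ≥ 2, the difference of any two distinct solutions of f(x) ≡ 0 (mod p^e) is divisible by p^{⌈e/2⌉}. -/
lemma sq_dvd_aux (p : ℕ) (hp : p.Prime) : ∀ e : ℕ, ∀ y : ℤ, (p:ℤ)^e ∣ y*y → (p:ℤ)^((e+1)/2) ∣ y := by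
  have hpz : Prime (p:ℤ) := Nat.prime_iff_prime_int.mp hp
  intro e
  induction e using Nat.strong_induction_on with
  | _ e ih =>
    match e with
    | 0 => intro y _; simpa using one_dvd y
    | 1 =>
      intro y h
      have : (p:ℤ) ∣ y * y := by simpa using h
      simpa using (hpz.dvd_mul.mp this).elim id id
    | (m+2) =>
      intro y h
      have hpy : (p:ℤ) ∣ y := by
        have : (p:ℤ) ∣ y * y := dvd_trans (dvd_pow_self _ (by omega : m+2 ≠ 0)) h
        exact (hpz.dvd_mul.mp this).elim id id
      obtain ⟨z, rfl⟩ := hpy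
      have h2 : (p:ℤ)^2 * (p:ℤ)^m ∣ (p:ℤ)^2 * (z*z) := by
        have he : (p:ℤ)^(m+2) = (p:ℤ)^2 * (p:ℤ)^m := by ring
        rw [he] at h; convert h using 1; ring
      have hz : (p:ℤ)^m ∣ z*z :=
        (mul_dvd_mul_iff_left (pow_ne_zero 2 hpz.ne_zero)).mp h2
      have hih := ih m (by omega) z hz
      have heq : (m+2+1)/2 = (m+1)/2 + 1 := by omega
      rw [heq, pow_succ]
      calc (p:ℤ)^((m+1)/2) * p ∣ z * p := mul_dvd_mul_right hih p
        _ = p * z := mul_comm _ _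

lemma rep_spec (m y : ℤ) (hm : 0 < m) :
    1 ≤ rep m y ∧ rep m y ≤ m ∧ m ∣ (y - rep m y) := by
  unfold rep
  split_ifs with h
  · exact ⟨hm, le_refl m, by simpa using (Int.dvd_of_emod_eq_zero h)⟩
  · refine ⟨?_, le_of_lt (Int.emod_lt_of_pos y hm), ?_⟩
    · have := Int.emod_nonneg y (ne_of_gt hm)
      omega
    · exact Int.dvd_self_sub_of_emod_eq rfl

/-- Let `p` be an odd prime with `p ∤ a` and `1 ≤ e ≤ v_p(D)` (i.e. `pᵉ ∣ D`),
`D = b² - 4ac`. Then `d_{pᵉ} = p^⌈e/2⌉`, and for `e ≥ 2` the difference of any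
two distinct solutions of `f(x) ≡ 0 (mod pᵉ)` is divisible by `p^⌈e/2⌉`. -/
theorem minDist_small_e (a b c : ℤ) (p : ℕ) (hp : p.Prime) (hodd : p ≠ 2)
    (hpa : ¬ (p : ℤ) ∣ a) (e : ℕ) (he : 1 ≤ e)
    (hD : (p : ℤ)^e ∣ (b^2 - 4*a*c)) :
    minDist (fun x => a*x^2 + b*x + c) p e = ((p^((e+1)/2) : ℕ) : ℕ∞) ∧
    (2 ≤ e → ∀ x₁ ∈ solSet (fun x => a*x^2 + b*x + c) p e,
      ∀ x₂ ∈ solSet (fun x => a*x^2 + b*x + c) p e, x₁ ≠ x₂ →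
        (p : ℤ)^((e+1)/2) ∣ (x₁ - x₂)) := by
  have hpz : Prime (p:ℤ) := Nat.prime_iff_prime_int.mp hp
  set k : ℕ := (e+1)/2 with hk
  have hke : k ≤ e := by omega
  have h2k : e ≤ 2*k := by omega
  -- p does not divide 2a nor 4a
  have hp2 : ¬ (p:ℤ) ∣ 2 := by
    intro h
    have h2 : (p:ℕ) ∣ 2 := by exact_mod_cast h
    exact hodd ((Nat.prime_dvd_prime_iff_eq hp Nat.prime_two).mp h2)
  have hp2a : ¬ (p:ℤ) ∣ 2*a := by
    intro h; rcases hpz.dvd_mul.mp h with h | h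
    · exact hp2 h
    · exact hpa h
  have hp4a : ¬ (p:ℤ) ∣ 4*a := by
    intro h
    have : (4:ℤ)*a = 2*(2*a) := by ring
    rw [this] at h
    rcases hpz.dvd_mul.mp h with h | h
    · exact hp2 h
    · exact hp2a h
  -- x₀ with p^k ∣ 2a x₀ + b
  have hcop : IsCoprime ((p:ℤ)^k) (2*a) :=
    ((hpz.coprime_iff_not_dvd.mpr hp2a).pow_left)
  have hcop2 := hcop
  obtain ⟨u, v, huv⟩ := hcop2
  set x₀ : ℤ := -(v*b) with hx₀
  have hroot : (p:ℤ)^k ∣ 2*a*x₀ + b := by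
    refine ⟨u*b, ?_⟩
    have : 2*a*x₀ + b = b*(1 - v*(2*a)) := by rw [hx₀]; ring
    rw [this, ← huv]; ring
  -- the key equivalence
  have hkey : ∀ x : ℤ, (p:ℤ)^e ∣ (a*x^2 + b*x + c) ↔ (p:ℤ)^k ∣ (x - x₀) := by
    intro x
    have hid : (2*a*x+b)^2 - (b^2 - 4*a*c) = 4*a*(a*x^2+b*x+c) := by ring
    have hdiff : (2*a*x+b) - (2*a*x₀+b) = 2*a*(x - x₀) := by ring
    constructor
    · intro h
      have h1 : (p:ℤ)^e ∣ (2*a*x+b)^2 := by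
        have : (p:ℤ)^e ∣ 4*a*(a*x^2+b*x+c) := Dvd.dvd.mul_left h _
        rw [← hid] at this
        simpa using dvd_add this hD
      have h2 : (p:ℤ)^k ∣ (2*a*x+b) := by
        apply sq_dvd_aux p hp e
        simpa [sq] using h1
      have h3 : (p:ℤ)^k ∣ 2*a*(x - x₀) := by
        rw [← hdiff]; exact dvd_sub h2 hroot
      exact hcop.dvd_of_dvd_mul_left h3
    · intro h
      have h2 : (p:ℤ)^k ∣ (2*a*x+b) := by
        have h8 : (p:ℤ)^k ∣ 2*a*(x-x₀) := Dvd.dvd.mul_left h _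
        rw [← hdiff] at h8
        have h9 := dvd_add h8 hroot
        have h10 : (2*a*x+b) - (2*a*x₀+b) + (2*a*x₀+b) = 2*a*x+b := by ring
        rwa [h10] at h9
      have h1 : (p:ℤ)^e ∣ (2*a*x+b)^2 := by
        calc (p:ℤ)^e ∣ (p:ℤ)^(2*k) := pow_dvd_pow _ h2k
          _ ∣ (2*a*x+b)^2 := by
              rw [two_mul, pow_add, sq]; exact mul_dvd_mul h2 h2
      have h4 : (p:ℤ)^e ∣ 4*a*(a*x^2+b*x+c) := by
        rw [← hid]; exact dvd_sub h1 hD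
      have hcop4 : IsCoprime ((p:ℤ)^e) (4*a) :=
        ((hpz.coprime_iff_not_dvd.mpr hp4a).pow_left)
      exact hcop4.dvd_of_dvd_mul_left h4
  -- basic positivity
  have hppos : (0:ℤ) < p := by exact_mod_cast hp.pos
  have hpkpos : (0:ℤ) < (p:ℤ)^k := pow_pos hppos k
  have hpepos : (0:ℤ) < (p:ℤ)^e := pow_pos hppos e
  have hpkle : (p:ℤ)^k ≤ (p:ℤ)^e := pow_le_pow_right₀ (by exact_mod_cast hp.one_lt.le) hke
  have hpkdvde : (p:ℤ)^k ∣ (p:ℤ)^e := pow_dvd_pow _ hke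
  -- r := rep p^k x₀ is a solution
  set r : ℤ := rep ((p:ℤ)^k) x₀ with hr
  obtain ⟨hr1, hr2, hr3⟩ := rep_spec ((p:ℤ)^k) x₀ hpkpos
  have hrsol : r ∈ solSet (fun x => a*x^2 + b*x + c) p e := by
    refine ⟨hr1, le_trans hr2 hpkle, ?_⟩
    simp only []
    rw [hkey r]
    have h7 : r - x₀ = -(x₀ - r) := by ring
    rw [h7]
    exact dvd_neg.mpr hr3
  -- divisibility of differences of solutions
  have hdvd_diff : ∀ x₁ ∈ solSet (fun x => a*x^2 + b*x + c) p e,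
      ∀ x₂ ∈ solSet (fun x => a*x^2 + b*x + c) p e, (p:ℤ)^k ∣ (x₁ - x₂) := by
    intro x₁ h₁ x₂ h₂
    have d₁ : (p:ℤ)^k ∣ (x₁ - x₀) := (hkey x₁).mp h₁.2.2
    have d₂ : (p:ℤ)^k ∣ (x₂ - x₀) := (hkey x₂).mp h₂.2.2
    have := dvd_sub d₁ d₂
    simpa using this
  -- lower bound on pairDist
  have hlow : ∀ x₁ ∈ solSet (fun x => a*x^2 + b*x + c) p e,
      ∀ x₂ ∈ solSet (fun x => a*x^2 + b*x + c) p e,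
      (p:ℤ)^k ≤ pairDist ((p:ℤ)^e) x₁ x₂ := by
    intro x₁ h₁ x₂ h₂
    have key : ∀ y : ℤ, (p:ℤ)^k ∣ y → (p:ℤ)^k ≤ rep ((p:ℤ)^e) y := by
      intro y hy
      obtain ⟨g1, g2, g3⟩ := rep_spec ((p:ℤ)^e) y hpepos
      have : (p:ℤ)^k ∣ rep ((p:ℤ)^e) y := by
        have h5 : (p:ℤ)^k ∣ y - rep ((p:ℤ)^e) y := dvd_trans hpkdvde g3
        have := dvd_sub hy h5
        simpa using this
      exact Int.le_of_dvd (by omega) this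
    exact le_min (key _ (hdvd_diff x₁ h₁ x₂ h₂)) (key _ (hdvd_diff x₂ h₂ x₁ h₁))
  -- existence of a pair at distance exactly p^k
  have hex : ∃ x₁ ∈ solSet (fun x => a*x^2 + b*x + c) p e,
      ∃ x₂ ∈ solSet (fun x => a*x^2 + b*x + c) p e,
      pairDist ((p:ℤ)^e) x₁ x₂ = (p:ℤ)^k := by
    rcases eq_or_lt_of_le he with he1 | he2
    · -- e = 1 : single root, pairDist r r = p^e = p^k
      have hek : k = e := by omega
      refine ⟨r, hrsol, r, hrsol, ?_⟩
      have hz : rep ((p:ℤ)^e) 0 = (p:ℤ)^e := by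
        unfold rep; simp
      simp [pairDist, hz, hek]
    · -- e ≥ 2 : k < e, use r and r + p^k
      have hkl : k < e := by omega
      have h2pk : 2*(p:ℤ)^k ≤ (p:ℤ)^e := by
        calc 2*(p:ℤ)^k ≤ (p:ℤ)*(p:ℤ)^k := by
              have : (2:ℤ) ≤ p := by exact_mod_cast hp.two_le
              nlinarith
          _ = (p:ℤ)^(k+1) := by ring
          _ ≤ (p:ℤ)^e := pow_le_pow_right₀ (by exact_mod_cast hp.one_lt.le) (by omega)
      have hr2sol : r + (p:ℤ)^k ∈ solSet (fun x => a*x^2 + b*x + c) p e := by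
        refine ⟨by omega, by omega, ?_⟩
        simp only []
        rw [hkey]
        have : r + (p:ℤ)^k - x₀ = (r - x₀) + (p:ℤ)^k := by ring
        rw [this]
        refine dvd_add ?_ dvd_rfl
        have h7 : r - x₀ = -(x₀ - r) := by ring
        rw [h7]
        exact dvd_neg.mpr hr3
      refine ⟨r, hrsol, r + (p:ℤ)^k, hr2sol, ?_⟩
      have hA : rep ((p:ℤ)^e) (r - (r + (p:ℤ)^k)) = (p:ℤ)^e - (p:ℤ)^k := by
        have h1 : r - (r + (p:ℤ)^k) = -(p:ℤ)^k := by ring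
        have h2 : (-(p:ℤ)^k) % ((p:ℤ)^e) = (p:ℤ)^e - (p:ℤ)^k := by
          have h3 : ((p:ℤ)^e - (p:ℤ)^k) % ((p:ℤ)^e) = (p:ℤ)^e - (p:ℤ)^k :=
            Int.emod_eq_of_lt (by omega) (by omega)
          calc (-(p:ℤ)^k) % ((p:ℤ)^e) = (-(p:ℤ)^k + (p:ℤ)^e * 1) % ((p:ℤ)^e) :=
                (Int.add_mul_emod_self_left (-(p:ℤ)^k) ((p:ℤ)^e) 1).symm
            _ = (p:ℤ)^e - (p:ℤ)^k := by rw [show -(p:ℤ)^k + (p:ℤ)^e * 1 = (p:ℤ)^e - (p:ℤ)^k by ring, h3]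
        rw [h1, rep, h2]
        have : (p:ℤ)^e - (p:ℤ)^k ≠ 0 := by omega
        simp [this]
      have hB : rep ((p:ℤ)^e) ((r + (p:ℤ)^k) - r) = (p:ℤ)^k := by
        have h1 : (r + (p:ℤ)^k) - r = (p:ℤ)^k := by ring
        have h2 : ((p:ℤ)^k) % ((p:ℤ)^e) = (p:ℤ)^k := Int.emod_eq_of_lt (by omega) (by omega)
        rw [h1, rep, h2]
        have : (p:ℤ)^k ≠ 0 := by omega
        simp [this]
      rw [pairDist, hA, hB]
      omega
  constructor
  · -- the minimal distance
    rw [minDist, if_neg (by omega : ¬ e = 0)]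
    apply le_antisymm
    · obtain ⟨x₁, h₁, x₂, h₂, heq⟩ := hex
      apply sInf_le
      refine ⟨x₁, h₁, x₂, h₂, ?_⟩
      rw [heq, show ((p:ℤ))^k = ((p^k : ℕ) : ℤ) by push_cast; ring, Int.toNat_natCast]
    · apply le_sInf
      rintro d ⟨x₁, h₁, x₂, h₂, rfl⟩
      have hl := hlow x₁ h₁ x₂ h₂
      have : (p^k : ℕ) ≤ (pairDist ((p:ℤ)^e) x₁ x₂).toNat := by
        have hc : ((p^k : ℕ) : ℤ) ≤ pairDist ((p:ℤ)^e) x₁ x₂ := by push_cast; linarith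
        omega
      exact_mod_cast Nat.cast_le.mpr this
  · intro _ x₁ h₁ x₂ h₂ _
    exact hdvd_diff x₁ h₁ x₂ h₂
end

section
/- Let p be an odd prime not dividing a, with v_p(D) even and (D_p/p) = 1 where D_p = D/p^{v_p(D)}. Then for every e > v_p(D), the minimal distance d_{p^e} among roots of f(x) ≡ 0 (mod p^e) equals the smallest positive integer root of the congruence a^2 x^2 ≡ D (mod p^e). -/
private lemma coprime_of_prime_not_dvd {p : ℕ} (hp : p.Prime) {a : ℤ} (hpa : ¬(p:ℤ) ∣ a) :
    IsCoprime (p:ℤ) a := by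
  rw [Int.isCoprime_iff_gcd_eq_one]
  exact hp.coprime_iff_not_dvd.mpr (fun h => hpa (Int.natCast_dvd.mpr h))

private lemma int_pow_dvd_iff_natAbs (A : ℤ) (k p : ℕ) : (p:ℤ)^k ∣ A ↔ p^k ∣ A.natAbs := by
  rw [Int.natCast_dvd.symm]; norm_cast

private lemma sq_val_lemma {p : ℕ} (hp : p.Prime) {w : ℕ} {z : ℤ}
    (h1 : (p:ℤ)^(w+w) ∣ z^2) (h2 : ¬ (p:ℤ)^(w+w+1) ∣ z^2) :
    (p:ℤ)^w ∣ z ∧ ¬ (p:ℤ)^(w+1) ∣ z := by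
  constructor
  · have h : ((p:ℤ)^w)^2 ∣ z^2 := by
      rw [← pow_mul]
      rwa [show w*2 = w+w by omega]
    exact (Int.pow_dvd_pow_iff (by norm_num)).mp h
  · intro h
    apply h2
    have h3 : ((p:ℤ)^(w+1))^2 ∣ z^2 := pow_dvd_pow_of_dvd h 2
    rw [← pow_mul] at h3
    exact (pow_dvd_pow (p:ℤ) (by omega)).trans h3

private lemma dichotomy {p : ℕ} (hp : p.Prime) {e v : ℕ} (A B : ℤ)
    (hAB : (p:ℤ)^(e+v) ∣ A*B) (hmin : ¬ ((p:ℤ)^(v+1) ∣ A ∧ (p:ℤ)^(v+1) ∣ B)) :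
    (p:ℤ)^e ∣ A ∨ (p:ℤ)^e ∣ B := by
  rcases eq_or_ne A 0 with rfl | hA0
  · exact Or.inl (dvd_zero _)
  rcases eq_or_ne B 0 with rfl | hB0
  · exact Or.inr (dvd_zero _)
  have hA0' : A.natAbs ≠ 0 := Int.natAbs_ne_zero.mpr hA0
  have hB0' : B.natAbs ≠ 0 := Int.natAbs_ne_zero.mpr hB0
  rw [int_pow_dvd_iff_natAbs, Int.natAbs_mul] at hAB
  have hsum : e + v ≤ A.natAbs.factorization p + B.natAbs.factorization p := by
    have h := (Nat.Prime.pow_dvd_iff_le_factorization hp (Nat.mul_ne_zero hA0' hB0')).mp hAB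
    rwa [Nat.factorization_mul hA0' hB0', Finsupp.add_apply] at h
  have key : ∀ X Y : ℤ, X.natAbs ≠ 0 → Y.natAbs ≠ 0 →
      e + v ≤ X.natAbs.factorization p + Y.natAbs.factorization p →
      ¬ (p:ℤ)^(v+1) ∣ X → (p:ℤ)^e ∣ Y := by
    intro X Y hX hY hs h
    rw [int_pow_dvd_iff_natAbs, Nat.Prime.pow_dvd_iff_le_factorization hp hX, not_le] at h
    rw [int_pow_dvd_iff_natAbs, Nat.Prime.pow_dvd_iff_le_factorization hp hY]
    omega
  rw [not_and_or] at hmin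
  rcases hmin with h | h
  · exact Or.inr (key A B hA0' hB0' hsum h)
  · exact Or.inl (key B A hB0' hA0' (by omega) h)

/-- Let `p` be an odd prime with `p ∤ a`, `D = b² - 4ac`, `v = v_p(D)` even and
`D_p = D/pᵛ` a quadratic residue mod `p`. Then for every `e > v`, the minimal
distance `d_{pᵉ}` among roots of `f(x) ≡ 0 (mod pᵉ)` equals the smallest
positive root of `a²x² ≡ D (mod pᵉ)`. -/
theorem minDist_eq_least_root (a b c : ℤ) (p : ℕ) (hp : p.Prime) (hodd : p ≠ 2)
    (hpa : ¬ (p : ℤ) ∣ a) (v e : ℕ)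
    (hv : (p : ℤ)^v ∣ (b^2 - 4*a*c)) (hv' : ¬ (p : ℤ)^(v+1) ∣ (b^2 - 4*a*c))
    (hveven : Even v)
    (hres : IsSquare ((((b^2 - 4*a*c) / (p : ℤ)^v : ℤ) : ZMod p)))
    (he : v < e) :
    ∀ y₀ : ℕ, IsLeast {y : ℕ | 0 < y ∧
        (p : ℤ)^e ∣ (a^2 * (y : ℤ)^2 - (b^2 - 4*a*c))} y₀ →
      minDist (fun x => a*x^2 + b*x + c) p e = (y₀ : ℕ∞) := by
  intro y₀ hy₀
  obtain ⟨⟨hy₀pos, hy₀dvd⟩, hy₀min⟩ := hy₀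
  obtain ⟨w, rfl⟩ := hveven
  set D : ℤ := b^2 - 4*a*c with hD
  set P : ℤ := (p:ℤ)^e with hP
  have hpe0 : (0:ℤ) < P := by rw [hP]; exact pow_pos (by exact_mod_cast hp.pos) e
  have hp2 : ¬ (p:ℤ) ∣ 2 := by
    intro h
    have h2 : p ∣ 2 := by exact_mod_cast h
    exact hodd ((Nat.prime_dvd_prime_iff_eq hp Nat.prime_two).mp h2)
  have hca : IsCoprime ((p:ℤ)) a := coprime_of_prime_not_dvd hp hpa
  have hc2 : IsCoprime ((p:ℤ)) (2:ℤ) := coprime_of_prime_not_dvd hp hp2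
  have copPa : IsCoprime P a := hca.pow_left
  have copP2a : IsCoprime P (2*a) := (hc2.mul_right hca).pow_left
  have copP4 : IsCoprime P (4:ℤ) := by
    have h : IsCoprime P ((2:ℤ)*2) := (hc2.mul_right hc2).pow_left
    rwa [show (2:ℤ)*2 = 4 by norm_num] at h
  have copP4a : IsCoprime P (4*a) := copP4.mul_right copPa
  have hy₀posZ : (0:ℤ) < (y₀:ℤ) := by exact_mod_cast hy₀pos
  -- valuation of square roots of D mod P
  have sqrtval : ∀ z : ℤ, P ∣ z^2 - D → (p:ℤ)^w ∣ z ∧ ¬ (p:ℤ)^(w+1) ∣ z := by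
    intro z hz
    apply sq_val_lemma hp
    · have h1 : (p:ℤ)^(w+w) ∣ z^2 - D := dvd_trans (pow_dvd_pow _ (le_of_lt he)) hz
      have h2 := dvd_add h1 hv
      rwa [sub_add_cancel] at h2
    · intro hcon
      apply hv'
      have h1 : (p:ℤ)^(w+w+1) ∣ z^2 - D := dvd_trans (pow_dvd_pow _ (by omega)) hz
      have h2 := dvd_sub hcon h1
      rwa [sub_sub_cancel] at h2
  have hPsplit : P = (p:ℤ)^w * (p:ℤ)^(e-w) := by
    rw [hP, ← pow_add]
    congr 1
    omega
  have sqrtval' : ∀ y : ℤ, P ∣ a^2*y^2 - D → (p:ℤ)^w ∣ y ∧ ¬ (p:ℤ)^(w+1) ∣ a*y := by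
    intro y hy
    have h := sqrtval (a*y) (by rw [mul_pow]; exact hy)
    exact ⟨(hca.pow_left).dvd_of_dvd_mul_left h.1, h.2⟩
  have classClosure : ∀ y y' : ℤ, P ∣ a^2*y^2 - D → (p:ℤ)^(e-w) ∣ (y' - y) →
      P ∣ a^2*y'^2 - D := by
    intro y y' hy hy'
    have h1 : (p:ℤ)^w ∣ y := (sqrtval' y hy).1
    have h2 : (p:ℤ)^w ∣ y' := by
      rw [show y' = (y' - y) + y by ring]
      exact dvd_add (dvd_trans (pow_dvd_pow _ (by omega)) hy') h1
    have h3 : P ∣ (y' - y) * (y' + y) := by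
      rw [hPsplit, mul_comm ((p:ℤ)^w) _]
      exact mul_dvd_mul hy' (dvd_add h2 h1)
    rw [show a^2*y'^2 - D = a^2 * ((y' - y)*(y' + y)) + (a^2*y^2 - D) by ring]
    exact dvd_add (h3.mul_left _) hy
  -- y₀ minimality as an integer statement
  have le_of_sol : ∀ r : ℤ, 0 < r → P ∣ a^2*r^2 - D → (y₀:ℤ) ≤ r := by
    intro r hr hrd
    have h0 : ((r.toNat:ℤ)) = r := Int.toNat_of_nonneg hr.le
    have hmem : r.toNat ∈ {y : ℕ | 0 < y ∧ P ∣ a^2*(y:ℤ)^2 - D} := by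
      refine ⟨by omega, by rw [h0]; exact hrd⟩
    have h1 := hy₀min hmem
    calc (y₀:ℤ) ≤ (r.toNat:ℤ) := by exact_mod_cast h1
      _ = r := h0
  have hQ0 : (0:ℤ) < (p:ℤ)^(e-w) := pow_pos (by exact_mod_cast hp.pos) _
  have y₀lt : (y₀:ℤ) < (p:ℤ)^(e-w) := by
    have hndvd : ¬ (p:ℤ)^(e-w) ∣ (y₀:ℤ) := by
      intro h
      have h1 : (p:ℤ)^(w+1) ∣ a * y₀ :=
        ((dvd_trans (pow_dvd_pow _ (by omega)) h)).mul_left a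
      exact (sqrtval' y₀ hy₀dvd).2 h1
    set r := (y₀:ℤ) % ((p:ℤ)^(e-w)) with hr
    have hrpos : 0 < r :=
      lt_of_le_of_ne (Int.emod_nonneg _ hQ0.ne') (fun hh => hndvd (Int.dvd_of_emod_eq_zero hh.symm))
    have hrlt : r < (p:ℤ)^(e-w) := Int.emod_lt_of_pos _ hQ0
    have hrmod : (p:ℤ)^(e-w) ∣ r - y₀ := by
      rw [hr, Int.emod_def]
      exact ⟨-((y₀:ℤ) / (p:ℤ)^(e-w)), by ring⟩
    have hrd : P ∣ a^2*r^2 - D := classClosure y₀ r hy₀dvd hrmod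
    exact lt_of_le_of_lt (le_of_sol r hrpos hrd) hrlt
  have hQleP : (p:ℤ)^(e-w) ≤ P := by
    rw [hP]
    exact pow_le_pow_right₀ (by exact_mod_cast hp.one_lt.le) (by omega)
  have hy₀P : (y₀:ℤ) < P := lt_of_lt_of_le y₀lt hQleP
  -- rep spec
  have rep_spec : ∀ y : ℤ, 1 ≤ rep P y ∧ rep P y ≤ P ∧ P ∣ rep P y - y := by
    intro y
    unfold rep
    split_ifs with h
    · exact ⟨by omega, le_refl P, by
        have h1 : P ∣ y := Int.dvd_of_emod_eq_zero h
        exact dvd_sub (dvd_refl P) h1⟩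
    · have h1 : 0 ≤ y % P := Int.emod_nonneg y hpe0.ne'
      have h2 : y % P < P := Int.emod_lt_of_pos y hpe0
      refine ⟨by omega, h2.le, ?_⟩
      rw [Int.emod_def]
      exact ⟨-(y / P), by ring⟩
  have fcong : ∀ x x' : ℤ, P ∣ x - x' → P ∣ (a*x^2+b*x+c) - (a*x'^2+b*x'+c) := by
    intro x x' h
    rw [show (a*x^2+b*x+c) - (a*x'^2+b*x'+c) = (x - x') * (a*(x+x') + b) by ring]
    exact h.mul_right _
  have sol_of : ∀ x : ℤ, P ∣ (2*a*x+b)^2 - D → P ∣ a*x^2+b*x+c := by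
    intro x h
    rw [show (2*a*x+b)^2 - D = (4*a) * (a*x^2+b*x+c) by rw [hD]; ring] at h
    exact copP4a.dvd_of_dvd_mul_left h
  have root_z : ∀ x : ℤ, P ∣ a*x^2+b*x+c → P ∣ (2*a*x+b)^2 - D := by
    intro x h
    rw [show (2*a*x+b)^2 - D = (4*a) * (a*x^2+b*x+c) by rw [hD]; ring]
    exact h.mul_left _
  -- lower bound for all pair distances
  have bound : ∀ u₁ u₂ : ℤ, u₁ ∈ solSet (fun x => a*x^2 + b*x + c) p e →
      u₂ ∈ solSet (fun x => a*x^2 + b*x + c) p e → (y₀:ℤ) ≤ rep P (u₁ - u₂) := by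
    intro u₁ u₂ h₁ h₂
    obtain ⟨-, -, hf₁⟩ := h₁
    obtain ⟨-, -, hf₂⟩ := h₂
    simp only at hf₁ hf₂
    have hz₁ : P ∣ (2*a*u₁+b)^2 - D := root_z u₁ hf₁
    have hz₂ : P ∣ (2*a*u₂+b)^2 - D := root_z u₂ hf₂
    obtain ⟨hr1, hr2, hr3⟩ := rep_spec (u₁ - u₂)
    set r := rep P (u₁ - u₂) with hrdef
    set z₁ : ℤ := 2*a*u₁+b with hz₁def
    set z₂ : ℤ := 2*a*u₂+b with hz₂def
    by_cases hA : P ∣ z₁*z₂ - D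
    · -- r is a multiple of p^(e-w)
      have hz₁v := sqrtval z₁ hz₁
      obtain ⟨u, hu⟩ := hz₁v.1
      have hpu : ¬ (p:ℤ) ∣ u := by
        intro h
        apply hz₁v.2
        rw [hu, pow_succ]
        exact mul_dvd_mul_left _ h
      have h1 : P ∣ z₁ * (z₁ - z₂) := by
        rw [show z₁*(z₁ - z₂) = (z₁^2 - D) - (z₁*z₂ - D) by ring]
        exact dvd_sub hz₁ hA
      have h2 : (p:ℤ)^(e-w) ∣ u * (z₁ - z₂) := by
        have hP' : (p:ℤ)^w * (p:ℤ)^(e-w) ∣ (p:ℤ)^w * (u * (z₁ - z₂)) := by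
          rw [← hPsplit, ← mul_assoc, ← hu]; exact h1
        exact (mul_dvd_mul_iff_left (pow_ne_zero w (by exact_mod_cast hp.ne_zero))).mp hP'
      have h3 : (p:ℤ)^(e-w) ∣ z₁ - z₂ :=
        ((coprime_of_prime_not_dvd hp hpu).pow_left).dvd_of_dvd_mul_left h2
      have h4 : (p:ℤ)^(e-w) ∣ u₁ - u₂ := by
        rw [show z₁ - z₂ = (2*a)*(u₁ - u₂) by rw [hz₁def, hz₂def]; ring] at h3
        exact (((hc2.mul_right hca)).pow_left).dvd_of_dvd_mul_left h3
      have h5 : (p:ℤ)^(e-w) ∣ r := by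
        rw [show r = (r - (u₁ - u₂)) + (u₁ - u₂) by ring]
        exact dvd_add (dvd_trans (pow_dvd_pow _ (by omega)) hr3) h4
      have h6 : (p:ℤ)^(e-w) ≤ r := Int.le_of_dvd (by omega) h5
      linarith
    · -- a² r² ≡ D (mod P)
      have hsq₂ : (p:ℤ)^(w+w) ∣ z₂^2 := by
        obtain ⟨u2, hu2⟩ := (sqrtval z₂ hz₂).1
        rw [hu2, pow_add]
        exact ⟨u2*u2, by ring⟩
      have hAB : (p:ℤ)^(e+(w+w)) ∣ (z₁*z₂ - D) * (z₁*z₂ + D) := by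
        rw [show (z₁*z₂ - D)*(z₁*z₂+D) = (z₁^2 - D)*z₂^2 + (z₂^2 - D)*D by ring, pow_add]
        exact dvd_add (mul_dvd_mul hz₁ hsq₂) (mul_dvd_mul hz₂ hv)
      have hnot : ¬ ((p:ℤ)^(w+w+1) ∣ (z₁*z₂ - D) ∧ (p:ℤ)^(w+w+1) ∣ (z₁*z₂ + D)) := by
        rintro ⟨ha1, ha2⟩
        have h1 := dvd_sub ha2 ha1
        rw [show z₁*z₂+D - (z₁*z₂-D) = 2*D by ring] at h1
        exact hv' ((hc2.pow_left).dvd_of_dvd_mul_left h1)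
      rcases dichotomy hp _ _ hAB hnot with h | hB
      · exact absurd h hA
      have hdd : P ∣ a^2*(u₁-u₂)^2 - D := by
        have h4 : P ∣ (4:ℤ) * (a^2*(u₁-u₂)^2 - D) := by
          rw [show (4:ℤ)*(a^2*(u₁-u₂)^2 - D)
              = (z₁^2 - D) + (z₂^2 - D) - 2*(z₁*z₂ + D) by rw [hz₁def, hz₂def]; ring]
          exact dvd_sub (dvd_add hz₁ hz₂) (hB.mul_left 2)
        exact copP4.dvd_of_dvd_mul_left h4
      have hrd : P ∣ a^2*r^2 - D := by
        rw [show a^2*r^2 - D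
            = a^2*((r - (u₁-u₂))*(r + (u₁-u₂))) + (a^2*(u₁-u₂)^2 - D) by ring]
        exact dvd_add ((hr3.mul_right _).mul_left _) hdd
      exact le_of_sol r (by omega) hrd
  -- construction of two roots at distance y₀
  have copP2a2 : IsCoprime P (2*a) := copP2a
  obtain ⟨s, t, hst⟩ := copP2a2
  have mkroot : ∀ z : ℤ, P ∣ (2*a*(t*(z-b)) + b) - z := by
    intro z
    rw [show (2*a*(t*(z-b)) + b) - z = (t*(2*a) - 1)*(z-b) by ring,
       show (t*(2*a) - 1) = -(s*P) by linarith]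
    exact ⟨-(s*(z-b)), by ring⟩
  set x₁ : ℤ := t*((a*y₀) - b) with hx₁def
  set x₂ : ℤ := t*((-(a*y₀)) - b) with hx₂def
  have hzz₁ : P ∣ (2*a*x₁ + b) - a*y₀ := mkroot (a*y₀)
  have hzz₂ : P ∣ (2*a*x₂ + b) - (-(a*y₀)) := mkroot (-(a*y₀))
  have hfx₁ : P ∣ a*x₁^2+b*x₁+c := by
    apply sol_of
    rw [show (2*a*x₁+b)^2 - D
        = ((2*a*x₁+b) - a*y₀) * ((2*a*x₁+b) + a*y₀) + (a^2*(y₀:ℤ)^2 - D) by ring]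
    exact dvd_add (hzz₁.mul_right _) hy₀dvd
  have hfx₂ : P ∣ a*x₂^2+b*x₂+c := by
    apply sol_of
    rw [show (2*a*x₂+b)^2 - D
        = ((2*a*x₂+b) - (-(a*y₀))) * ((2*a*x₂+b) + (-(a*y₀))) + (a^2*(y₀:ℤ)^2 - D) by ring]
    exact dvd_add (hzz₂.mul_right _) hy₀dvd
  obtain ⟨hX₁1, hX₁2, hX₁3⟩ := rep_spec x₁
  obtain ⟨hX₂1, hX₂2, hX₂3⟩ := rep_spec x₂
  set X₁ : ℤ := rep P x₁ with hX₁def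
  set X₂ : ℤ := rep P x₂ with hX₂def
  have memX₁ : X₁ ∈ solSet (fun x => a*x^2 + b*x + c) p e := by
    refine ⟨hX₁1, hX₁2, ?_⟩
    show P ∣ a*X₁^2+b*X₁+c
    rw [show a*X₁^2+b*X₁+c = ((a*X₁^2+b*X₁+c) - (a*x₁^2+b*x₁+c)) + (a*x₁^2+b*x₁+c) by ring]
    exact dvd_add (fcong X₁ x₁ hX₁3) hfx₁
  have memX₂ : X₂ ∈ solSet (fun x => a*x^2 + b*x + c) p e := by
    refine ⟨hX₂1, hX₂2, ?_⟩
    show P ∣ a*X₂^2+b*X₂+c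
    rw [show a*X₂^2+b*X₂+c = ((a*X₂^2+b*X₂+c) - (a*x₂^2+b*x₂+c)) + (a*x₂^2+b*x₂+c) by ring]
    exact dvd_add (fcong X₂ x₂ hX₂3) hfx₂
  have hdiff : P ∣ (X₁ - X₂) - y₀ := by
    have h1 : P ∣ (2*a) * ((x₁ - x₂) - y₀) := by
      rw [show (2*a) * ((x₁ - x₂) - y₀)
          = ((2*a*x₁+b) - a*y₀) - ((2*a*x₂+b) - (-(a*y₀))) by ring]
      exact dvd_sub hzz₁ hzz₂
    have h2 : P ∣ (x₁ - x₂) - y₀ := copP2a.dvd_of_dvd_mul_left h1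
    rw [show (X₁ - X₂) - y₀ = ((X₁ - x₁) - (X₂ - x₂)) + ((x₁ - x₂) - y₀) by ring]
    exact dvd_add (dvd_sub hX₁3 hX₂3) h2
  obtain ⟨k, hk⟩ := hdiff
  have hmod1 : (X₁ - X₂) % P = (y₀:ℤ) := by
    rw [show X₁ - X₂ = (y₀:ℤ) + P * k by linarith [hk]]
    rw [Int.add_mul_emod_self_left]
    exact Int.emod_eq_of_lt (by positivity) hy₀P
  have hmod2 : (X₂ - X₁) % P = P - y₀ := by
    rw [show X₂ - X₁ = (P - y₀) + P * (-k - 1) by linarith [hk]]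
    rw [Int.add_mul_emod_self_left]
    exact Int.emod_eq_of_lt (by linarith) (by linarith)
  have hmin2 : (y₀:ℤ) ≤ P - y₀ := by
    apply le_of_sol _ (by linarith)
    rw [show a^2*(P - y₀)^2 - D = P * (a^2*(P - 2*y₀)) + (a^2*(y₀:ℤ)^2 - D) by ring]
    exact dvd_add (dvd_mul_right _ _) hy₀dvd
  have hpd : pairDist P X₁ X₂ = (y₀:ℤ) := by
    unfold pairDist rep
    rw [hmod1, hmod2]
    rw [if_neg (by omega), if_neg (by omega)]
    exact min_eq_left (by linarith)
  -- assemble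
  rw [minDist, if_neg (by omega : e ≠ 0)]
  apply IsLeast.csInf_eq
  constructor
  · refine ⟨X₁, memX₁, X₂, memX₂, ?_⟩
    show (y₀:ℕ∞) = ((pairDist P X₁ X₂).toNat : ℕ∞)
    rw [hpd]
    simp
  · rintro d ⟨u₁, h₁, u₂, h₂, rfl⟩
    have b1 := bound u₁ u₂ h₁ h₂
    have b2 := bound u₂ u₁ h₂ h₁
    have hle : (y₀:ℤ) ≤ pairDist P u₁ u₂ := le_min b1 b2
    have hn : y₀ ≤ (pairDist P u₁ u₂).toNat := by omega
    rw [hP] at hn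
    exact_mod_cast hn
end

section
/- There is at most one prime p such that v_p(k+1) ≥ v_p(B_k) ≥ 1, where B_k = lcm_{1 ≤ i ≤ k}{ i(a^2 i^2 - D) } and D ≠ a^2 i^2 for all 1 ≤ i ≤ k. (This follows since v_p(B_k) ≥ v_p(lcm(1,...,k)) for every prime p ≤ k, together with the Farhi–Kane result that at most one prime p ≤ k satisfies v_p(k+1) ≥ v_p(lcm(1,...,k)) ≥ 1.) -/
/-!
Every prime power `p ^ e ≤ k` divides some `i ≤ k`, hence `B_k`, so `v_p(B_k) ≥ ⌊log_p k⌋`.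
If moreover `1 ≤ v_p(B_k) ≤ v_p(k + 1)`, then `p ∣ k + 1` and `k < p ^ (v_p(k+1) + 1)`, i.e. the
part of `k + 1` prime to `p` is at most `p`. Two distinct primes `p, q` cannot both do this:
`q` divides the part of `k + 1` prime to `p`, so `q ≤ p`, and symmetrically `p ≤ q`.
-/

namespace Nat

lemma prime_le_ordCompl_of_dvd {n p q : ℕ} (hp : p.Prime) (hq : q.Prime) (hpq : p ≠ q)
    (hn : n ≠ 0) (hqn : q ∣ n) : q ≤ ordCompl[p] n :=
  Nat.le_of_dvd (ordCompl_pos p hn)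
    (dvd_ordCompl_of_dvd_not_dvd hqn fun h => hpq ((prime_dvd_prime_iff_eq hp hq).mp h))

lemma eq_of_ordCompl_le_self {n p q : ℕ} (hp : p.Prime) (hq : q.Prime) (hn : n ≠ 0)
    (hpn : p ∣ n) (hqn : q ∣ n) (hp' : ordCompl[p] n ≤ p) (hq' : ordCompl[q] n ≤ q) :
    p = q := by
  by_contra hpq
  have hqp : q ≤ p := (prime_le_ordCompl_of_dvd hp hq hpq hn hqn).trans hp'
  have hpq' : p ≤ q := (prime_le_ordCompl_of_dvd hq hp (Ne.symm hpq) hn hpn).trans hq'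
  exact hpq (le_antisymm hpq' hqp)

lemma ordCompl_succ_le_of_log_le {p k : ℕ} (hp : p.Prime)
    (h : Nat.log p k ≤ (k + 1).factorization p) : ordCompl[p] (k + 1) ≤ p := by
  apply Nat.div_le_of_le_mul
  calc k + 1 ≤ p ^ (Nat.log p k + 1) := Nat.lt_pow_succ_log_self hp.one_lt k
    _ ≤ p ^ ((k + 1).factorization p + 1) := Nat.pow_le_pow_right hp.pos (by omega)
    _ = ordProj[p] (k + 1) * p := pow_succ _ _

end Nat

lemma log_le_factorization_lcm {k p : ℕ} (hp : p.Prime) (f : ℕ → ℤ)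
    (hf : ∀ i ∈ Finset.Icc 1 k, (i : ℤ) ∣ f i) (h0 : (Finset.Icc 1 k).lcm f ≠ 0) :
    Nat.log p k ≤ ((Finset.Icc 1 k).lcm f).natAbs.factorization p := by
  rcases Nat.eq_zero_or_pos k with rfl | hk
  · simp
  have hmem : p ^ Nat.log p k ∈ Finset.Icc 1 k :=
    Finset.mem_Icc.mpr ⟨Nat.one_le_pow _ _ hp.pos, Nat.pow_log_le_self p hk.ne'⟩
  have hdvd : ((p ^ Nat.log p k : ℕ) : ℤ) ∣ (Finset.Icc 1 k).lcm f :=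
    (hf _ hmem).trans (Finset.dvd_lcm hmem)
  exact (hp.pow_dvd_iff_le_factorization (Int.natAbs_ne_zero.mpr h0)).mp
    (Int.natCast_dvd.mp hdvd)

lemma dvd_and_ordCompl_le_of_factorization_lcm {k p : ℕ} (hp : p.Prime) (f : ℕ → ℤ)
    (hf : ∀ i ∈ Finset.Icc 1 k, (i : ℤ) ∣ f i)
    (h1 : 1 ≤ ((Finset.Icc 1 k).lcm f).natAbs.factorization p)
    (h2 : ((Finset.Icc 1 k).lcm f).natAbs.factorization p ≤ (k + 1).factorization p) :
    p ∣ k + 1 ∧ ordCompl[p] (k + 1) ≤ p := by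
  have h0 : (Finset.Icc 1 k).lcm f ≠ 0 := fun h => by simp [h] at h1
  refine ⟨(hp.dvd_iff_one_le_factorization k.succ_ne_zero).mpr (h1.trans h2), ?_⟩
  exact Nat.ordCompl_succ_le_of_log_le hp ((log_le_factorization_lcm hp f hf h0).trans h2)

theorem at_most_one_prime_general (a D : ℤ) (k : ℕ)
    (p q : ℕ) (hp : p.Prime) (hq : q.Prime)
    (hp1 : 1 ≤ (((Finset.Icc 1 k).lcm
        (fun i : ℕ => (i : ℤ) * (a^2 * (i : ℤ)^2 - D))).natAbs.factorization p))
    (hp2 : (((Finset.Icc 1 k).lcm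
        (fun i : ℕ => (i : ℤ) * (a^2 * (i : ℤ)^2 - D))).natAbs.factorization p)
        ≤ (k+1).factorization p)
    (hq1 : 1 ≤ (((Finset.Icc 1 k).lcm
        (fun i : ℕ => (i : ℤ) * (a^2 * (i : ℤ)^2 - D))).natAbs.factorization q))
    (hq2 : (((Finset.Icc 1 k).lcm
        (fun i : ℕ => (i : ℤ) * (a^2 * (i : ℤ)^2 - D))).natAbs.factorization q)
        ≤ (k+1).factorization q) :
    p = q := by
  have hf : ∀ i ∈ Finset.Icc 1 k, (i : ℤ) ∣ (i : ℤ) * (a^2 * (i : ℤ)^2 - D) :=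
    fun _ _ => dvd_mul_right _ _
  obtain ⟨hpk, hp'⟩ := dvd_and_ordCompl_le_of_factorization_lcm hp _ hf hp1 hp2
  obtain ⟨hqk, hq'⟩ := dvd_and_ordCompl_le_of_factorization_lcm hq _ hf hq1 hq2
  exact Nat.eq_of_ordCompl_le_self hp hq k.succ_ne_zero hpk hqk hp' hq'

/-- There is at most one prime `p` with `v_p(k+1) ≥ v_p(B_k) ≥ 1`, where
`B_k = lcm_{1 ≤ i ≤ k}{i(a²i² - D)}` and `D ≠ a²i²` for all `1 ≤ i ≤ k`. -/
theorem at_most_one_prime (a D : ℤ) (ha : 1 ≤ a) (k : ℕ) (hk : 1 ≤ k)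
    (hD : ∀ i : ℕ, 1 ≤ i → i ≤ k → D ≠ a^2 * (i : ℤ)^2)
    (p q : ℕ) (hp : p.Prime) (hq : q.Prime)
    (hp1 : 1 ≤ (((Finset.Icc 1 k).lcm
        (fun i : ℕ => (i : ℤ) * (a^2 * (i : ℤ)^2 - D))).natAbs.factorization p))
    (hp2 : (((Finset.Icc 1 k).lcm
        (fun i : ℕ => (i : ℤ) * (a^2 * (i : ℤ)^2 - D))).natAbs.factorization p)
        ≤ (k+1).factorization p)
    (hq1 : 1 ≤ (((Finset.Icc 1 k).lcm
        (fun i : ℕ => (i : ℤ) * (a^2 * (i : ℤ)^2 - D))).natAbs.factorization q))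
    (hq2 : (((Finset.Icc 1 k).lcm
        (fun i : ℕ => (i : ℤ) * (a^2 * (i : ℤ)^2 - D))).natAbs.factorization q)
        ≤ (k+1).factorization q) :
    p = q :=
  at_most_one_prime_general a D k p q hp hq hp1 hp2 hq1 hq2
end

section
/- Let f(x) = a x^2 + b x + c with a ≥ 1 and D = b^2 - 4ac, and suppose D = a^2 i_0^2 for some integer 1 ≤ i_0 ≤ k. Then log lcm_{0 ≤ i ≤ k}{ f(n+i) } = (k + i_0 + 1)·log n + o(log n) as n → ∞; in particular log lcm_{0 ≤ i ≤ k}{f(n+i)} / log n → k + i_0 + 1. -/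
/-!
Since `D = (a i₀)²`, the quadratic splits as `4a f(x) = h(x) h(x + i₀)` with
`h(x) = 2ax + b - a i₀`. Put `x_j = h(n + j)`. The lcm `L` of `f(n), …, f(n + k)` divides
`x_0 ⋯ x_{k+i₀}`, and conversely every `x_j` with `j ≤ k + i₀` divides `4aL`, because
`i₀ ≤ k` makes each such `j` equal to `i` or `i + i₀` for some `i ≤ k`. The `x_j` form an
arithmetic progression of difference `2a`, so their pairwise gcds are bounded and the product
`x_0 ⋯ x_{k+i₀}` exceeds the lcm of its factors only by a bounded factor. As every `x_j` is of
order `n`, this gives `L ≍ n^(k+i₀+1)`.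
-/

open Filter Finset Real Topology

section GCD

variable {α : Type*} [CommMonoidWithZero α]

theorem gcd_prod_dvd_prod_gcd [GCDMonoid α] {ι : Type*} (a : α) (s : Finset ι) (f : ι → α) :
    gcd a (∏ i ∈ s, f i) ∣ ∏ i ∈ s, gcd a (f i) := by
  induction s using Finset.cons_induction with
  | empty => simp
  | cons i s hi ih =>
    rw [prod_cons, prod_cons]
    exact (gcd_mul_dvd_mul_gcd a _ _).trans (mul_dvd_mul_left _ ih)

theorem prod_range_dvd_lcm_mul_prod_gcd [NormalizedGCDMonoid α] (x : ℕ → α) (m : ℕ) :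
    ∏ j ∈ range m, x j ∣
      (range m).lcm x * ∏ j ∈ range m, ∏ i ∈ range j, gcd (x j) (x i) := by
  induction m with
  | zero => simp
  | succ m ih =>
    set L := (range m).lcm x
    set G := ∏ j ∈ range m, ∏ i ∈ range j, gcd (x j) (x i)
    have hgcd : gcd (x m) L ∣ ∏ i ∈ range m, gcd (x m) (x i) :=
      (gcd_dvd_gcd dvd_rfl (lcm_dvd fun i hi => dvd_prod_of_mem x hi)).trans
        (gcd_prod_dvd_prod_gcd _ _ _)
    rw [prod_range_succ, prod_range_succ, range_add_one, lcm_insert]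
    calc (∏ j ∈ range m, x j) * x m ∣ L * G * x m := mul_dvd_mul_right ih _
      _ = x m * L * G := by rw [mul_right_comm, mul_comm L]
      _ ∣ gcd (x m) L * GCDMonoid.lcm (x m) L * G :=
          mul_dvd_mul_right (gcd_mul_lcm (x m) L).symm.dvd _
      _ ∣ (∏ i ∈ range m, gcd (x m) (x i)) * GCDMonoid.lcm (x m) L * G :=
          mul_dvd_mul_right (mul_dvd_mul_right hgcd _) _
      _ = GCDMonoid.lcm (x m) L * (G * ∏ i ∈ range m, gcd (x m) (x i)) := by
          rw [mul_comm _ (GCDMonoid.lcm _ _), mul_assoc, mul_comm (∏ i ∈ range m, _)]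

end GCD

theorem gcd_pos_of_ne {y z : ℤ} (h : y ≠ z) : 0 < gcd y z := by
  refine (Int.gcd_nonneg y z).lt_of_ne fun h0 => h ?_
  obtain ⟨rfl, rfl⟩ := (gcd_eq_zero_iff y z).1 h0.symm
  rfl

theorem gcd_le_abs_sub {y z : ℤ} (h : y ≠ z) : gcd y z ≤ |y - z| :=
  Int.le_of_dvd (abs_pos.2 (sub_ne_zero.2 h))
    ((dvd_abs _ _).2 (dvd_sub (gcd_dvd_left y z) (gcd_dvd_right y z)))

section ArithmeticProgression

variable {x : ℕ → ℤ} {d : ℤ}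

theorem prod_prod_gcd_pos_and_le (hd : d ≠ 0) (hx : ∀ i j : ℕ, x j - x i = d * (j - i))
    (m : ℕ) :
    0 < ∏ j ∈ range m, ∏ i ∈ range j, gcd (x j) (x i) ∧
      ∏ j ∈ range m, ∏ i ∈ range j, gcd (x j) (x i) ≤ (|d| * m) ^ (m * m) := by
  have hne {i j : ℕ} (hij : i < j) : x j ≠ x i := by
    rw [← sub_ne_zero, hx]
    exact mul_ne_zero hd (sub_ne_zero.2 (by exact_mod_cast hij.ne'))
  have hle {i j : ℕ} (hij : i < j) (hjm : j < m) : gcd (x j) (x i) ≤ |d| * m := by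
    refine (gcd_le_abs_sub (hne hij)).trans ?_
    rw [hx, abs_mul, abs_of_pos (sub_pos.2 (by exact_mod_cast hij : (i : ℤ) < j))]
    gcongr
    omega
  constructor
  · exact prod_pos fun j _ => prod_pos fun i hi => gcd_pos_of_ne (hne (mem_range.1 hi))
  calc ∏ j ∈ range m, ∏ i ∈ range j, gcd (x j) (x i)
      ≤ ∏ _j ∈ range m, (|d| * m) ^ m := by
        refine prod_le_prod (fun j _ => prod_nonneg fun i _ => Int.gcd_nonneg _ _)
          fun j hj => ?_
        have hjm := mem_range.1 hj
        calc ∏ i ∈ range j, gcd (x j) (x i) ≤ ∏ _i ∈ range j, |d| * m :=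
              prod_le_prod (fun i _ => Int.gcd_nonneg _ _) fun i hi => hle (mem_range.1 hi) hjm
          _ ≤ (|d| * m) ^ m := by
            rw [prod_const, card_range]
            exact pow_le_pow_right₀
              (one_le_mul_of_one_le_of_one_le (Int.one_le_abs hd) (by omega)) hjm.le
    _ = (|d| * m) ^ (m * m) := by rw [prod_const, card_range, ← pow_mul, mul_comm]

theorem abs_prod_le_of_forall_dvd (hd : d ≠ 0) (hx : ∀ i j : ℕ, x j - x i = d * (j - i))
    {M : ℤ} (hM : M ≠ 0) {m : ℕ} (hdvd : ∀ j < m, x j ∣ M) :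
    |∏ j ∈ range m, x j| ≤ |M| * (|d| * m) ^ (m * m) := by
  obtain ⟨hG0, hG⟩ := prod_prod_gcd_pos_and_le hd hx m
  have hdiv :
      ∏ j ∈ range m, x j ∣ M * ∏ j ∈ range m, ∏ i ∈ range j, gcd (x j) (x i) :=
    (prod_range_dvd_lcm_mul_prod_gcd x m).trans
      (mul_dvd_mul_right (Finset.lcm_dvd fun j hj => hdvd j (mem_range.1 hj)) _)
  calc |∏ j ∈ range m, x j| ≤ |M * ∏ j ∈ range m, ∏ i ∈ range j, gcd (x j) (x i)| :=
        Int.le_of_dvd (abs_pos.2 (mul_ne_zero hM hG0.ne')) ((abs_dvd_abs _ _).2 hdiv)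
    _ ≤ |M| * (|d| * m) ^ (m * m) := by
        rw [abs_mul, abs_of_pos hG0]
        gcongr

end ArithmeticProgression

section ShiftedFactorization

variable {F x : ℕ → ℤ} {u : ℤ} {i₀ k : ℕ}

theorem lcm_dvd_prod_of_mul_shift_eq (hF : ∀ i, x i * x (i + i₀) = u * F i)
    (hi₀ : 1 ≤ i₀) :
    (range (k + 1)).lcm F ∣ ∏ j ∈ range (k + i₀ + 1), x j := by
  refine Finset.lcm_dvd fun i hi => ?_
  have hi := mem_range.1 hi
  calc F i ∣ x i * x (i + i₀) := ⟨u, by rw [hF, mul_comm]⟩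
    _ = ∏ j ∈ {i, i + i₀}, x j := (prod_pair (by omega)).symm
    _ ∣ ∏ j ∈ range (k + i₀ + 1), x j :=
        prod_dvd_prod_of_subset _ _ _ fun j hj => by
          rw [mem_insert, mem_singleton] at hj
          rw [mem_range]
          omega

theorem dvd_mul_lcm_of_mul_shift_eq (hF : ∀ i, x i * x (i + i₀) = u * F i) (hi₀k : i₀ ≤ k)
    {j : ℕ} (hj : j < k + i₀ + 1) : x j ∣ u * (range (k + 1)).lcm F := by
  obtain ⟨i, hi, hxF⟩ : ∃ i ≤ k, x j ∣ u * F i := by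
    by_cases hjk : j ≤ k
    · exact ⟨j, hjk, ⟨x (j + i₀), by rw [← hF]⟩⟩
    · refine ⟨j - i₀, by omega, ⟨x (j - i₀), ?_⟩⟩
      rw [← hF, Nat.sub_add_cancel (by omega), mul_comm]
  exact hxF.trans (mul_dvd_mul_left u (dvd_lcm (mem_range.2 (by omega))))

theorem lcm_pos_and_le_prod_and_prod_le (hF : ∀ i, x i * x (i + i₀) = u * F i)
    (hi₀ : 1 ≤ i₀) (hi₀k : i₀ ≤ k) (hu : 0 < u) {d : ℤ} (hd : 0 < d)
    (hx : ∀ i j : ℕ, x j - x i = d * (j - i)) (hpos : ∀ j < k + i₀ + 1, 0 < x j) :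
    0 < (range (k + 1)).lcm F ∧
      (range (k + 1)).lcm F ≤ ∏ j ∈ range (k + i₀ + 1), x j ∧
      ∏ j ∈ range (k + i₀ + 1), x j ≤
        u * (d * (k + i₀ + 1 : ℕ)) ^ ((k + i₀ + 1) * (k + i₀ + 1)) *
          (range (k + 1)).lcm F := by
  set L := (range (k + 1)).lcm F
  set P := ∏ j ∈ range (k + i₀ + 1), x j
  have hP : 0 < P := prod_pos fun j hj => hpos j (mem_range.1 hj)
  have hdvd : L ∣ P := lcm_dvd_prod_of_mul_shift_eq hF hi₀
  have hL : 0 < L :=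
    lt_of_le_of_ne (Int.nonneg_of_normalize_eq_self Finset.normalize_lcm) fun h =>
      hP.ne' (zero_dvd_iff.1 (h ▸ hdvd))
  have hbound := abs_prod_le_of_forall_dvd hd.ne' hx (mul_pos hu hL).ne' fun j hj =>
    dvd_mul_lcm_of_mul_shift_eq hF hi₀k hj
  rw [abs_of_pos hP, abs_of_pos (mul_pos hu hL), abs_of_pos hd] at hbound
  exact ⟨hL, Int.le_of_dvd hP hdvd, hbound.trans_eq (by ring)⟩

end ShiftedFactorization

theorem eventually_le_mul_add_le {p : ℤ} (hp : 2 ≤ p) (q : ℤ) :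
    ∀ᶠ n : ℕ in atTop, (n : ℤ) ≤ p * n + q ∧ p * n + q ≤ (p + 1) * n := by
  filter_upwards [eventually_ge_atTop q.natAbs] with n hn
  have hq := abs_le.1 (show |q| ≤ n by rw [← Int.natCast_natAbs]; exact_mod_cast hn)
  constructor <;> nlinarith

theorem tendsto_log_div_log_of_le_of_le {L : ℕ → ℝ} {m : ℕ} {K C : ℝ}
    (hK : 0 < K) (hC : 0 < C)
    (hL : ∀ᶠ n : ℕ in atTop, 0 < L n ∧ (n : ℝ) ^ m ≤ K * L n ∧ L n ≤ C * n ^ m) :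
    Tendsto (fun n : ℕ => log (L n) / log n) atTop (𝓝 m) := by
  have hlog : Tendsto (fun n : ℕ => log n) atTop atTop :=
    tendsto_log_atTop.comp tendsto_natCast_atTop_atTop
  have hlim (r : ℝ) : Tendsto (fun n : ℕ => m + r / log n) atTop (𝓝 m) := by
    simpa using tendsto_const_nhds.add (tendsto_const_nhds.div_atTop hlog)
  have hbound : ∀ᶠ n : ℕ in atTop, 0 < log n ∧
      -log K ≤ log (L n) - m * log n ∧ log (L n) - m * log n ≤ log C := by
    filter_upwards [hL, eventually_gt_atTop 1] with n ⟨hL0, hlow, hup⟩ hn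
    have hnm : (0 : ℝ) < n ^ m := by positivity
    have hlow := log_le_log hnm hlow
    have hup := log_le_log hL0 hup
    rw [log_pow, log_mul hK.ne' hL0.ne'] at hlow
    rw [log_mul hC.ne' hnm.ne', log_pow] at hup
    exact ⟨log_pos (by exact_mod_cast hn), by linarith, by linarith⟩
  have hsplit {n : ℕ} (hn : 0 < log n) :
      log (L n) / log n = m + (log (L n) - m * log n) / log n := by
    field_simp
    ring
  refine tendsto_of_tendsto_of_tendsto_of_le_of_le' (hlim (-log K)) (hlim (log C)) ?_ ?_
  · filter_upwards [hbound] with n ⟨hn, hlow, _⟩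
    rw [hsplit hn]
    gcongr
  · filter_upwards [hbound] with n ⟨hn, _, hup⟩
    rw [hsplit hn]
    gcongr

def windowLcm (a b c : ℤ) (k n : ℕ) : ℤ :=
  (range (k + 1)).lcm fun i : ℕ => a * ((n : ℤ) + i) ^ 2 + b * ((n : ℤ) + i) + c

theorem eventually_lcm_quadratic_bounds {a b c : ℤ} (ha : 1 ≤ a) {k i₀ : ℕ}
    (hi₀ : 1 ≤ i₀) (hi₀k : i₀ ≤ k) (hD : b ^ 2 - 4 * a * c = a ^ 2 * (i₀ : ℤ) ^ 2) :
    ∃ K C : ℤ, 0 < K ∧ 0 < C ∧ ∀ᶠ n : ℕ in atTop,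
      0 < windowLcm a b c k n ∧ (n : ℤ) ^ (k + i₀ + 1) ≤ K * windowLcm a b c k n ∧
        windowLcm a b c k n ≤ C * (n : ℤ) ^ (k + i₀ + 1) := by
  set m := k + i₀ + 1
  set x : ℕ → ℕ → ℤ := fun n j => 2 * a * n + (2 * a * j + b - a * i₀)
  have hF (n i : ℕ) :
      x n i * x n (i + i₀) = 4 * a * (a * ((n : ℤ) + i) ^ 2 + b * ((n : ℤ) + i) + c) := by
    simp only [x]; push_cast; linear_combination hD
  have hx (n i j : ℕ) : x n j - x n i = 2 * a * (j - i) := by simp only [x]; ring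
  refine ⟨4 * a * (2 * a * m) ^ (m * m), (2 * a + 1) ^ m, by positivity, by positivity, ?_⟩
  filter_upwards [eventually_gt_atTop 0, (eventually_all_finset (range m)).2 fun j _ =>
    eventually_le_mul_add_le (by omega : 2 ≤ 2 * a) (2 * a * j + b - a * i₀)] with n hn hxn
  have hn : (0 : ℤ) < n := by exact_mod_cast hn
  obtain ⟨hL, hLP, hPL⟩ := lcm_pos_and_le_prod_and_prod_le (hF n) hi₀ hi₀k (by positivity)
    (by positivity) (hx n) fun j hj => hn.trans_le (hxn j (mem_range.2 hj)).1
  have hP1 : (n : ℤ) ^ m ≤ ∏ j ∈ range m, x n j := by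
    simpa using prod_le_prod (fun _ _ => hn.le) fun j hj => (hxn j hj).1
  have hP2 : ∏ j ∈ range m, x n j ≤ (2 * a + 1) ^ m * n ^ m := by
    rw [← mul_pow]
    simpa using prod_le_prod (fun j hj => hn.le.trans (hxn j hj).1) fun j hj => (hxn j hj).2
  exact ⟨hL, hP1.trans hPL, hLP.trans hP2⟩

theorem log_lcm_asymptotic_general (a b c : ℤ) (ha : 1 ≤ a) (k : ℕ)
    (i₀ : ℕ) (hi₀ : 1 ≤ i₀) (hi₀k : i₀ ≤ k)
    (hD : b^2 - 4*a*c = a^2 * (i₀ : ℤ)^2) :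
    Tendsto (fun n : ℕ =>
        Real.log (((Finset.range (k+1)).lcm
          (fun i : ℕ => a*((n : ℤ)+i)^2 + b*((n : ℤ)+i) + c) : ℤ) : ℝ)
        / Real.log (n : ℝ))
      atTop (nhds ((k : ℝ) + (i₀ : ℝ) + 1)) := by
  obtain ⟨K, C, hK, hC, hbounds⟩ := eventually_lcm_quadratic_bounds ha hi₀ hi₀k hD
  have hlim := tendsto_log_div_log_of_le_of_le (L := fun n => (windowLcm a b c k n : ℝ))
    (m := k + i₀ + 1) (Int.cast_pos.2 hK) (Int.cast_pos.2 hC) <| by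
      filter_upwards [hbounds] with n ⟨hL, hlow, hup⟩
      exact ⟨Int.cast_pos.2 hL, by exact_mod_cast hlow, by exact_mod_cast hup⟩
  simpa only [windowLcm, Nat.cast_add, Nat.cast_one] using hlim

/-- Let `f(x) = ax² + bx + c` with `a ≥ 1` and `D = b² - 4ac = a²i₀²` for some
`1 ≤ i₀ ≤ k`. Then `log lcm_{0 ≤ i ≤ k}{f(n+i)} = (k + i₀ + 1) log n + o(log n)`
as `n → ∞`; in particular the ratio to `log n` tends to `k + i₀ + 1`. -/
theorem log_lcm_asymptotic (a b c : ℤ) (ha : 1 ≤ a) (k : ℕ) (hk : 1 ≤ k)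
    (i₀ : ℕ) (hi₀ : 1 ≤ i₀) (hi₀k : i₀ ≤ k)
    (hD : b^2 - 4*a*c = a^2 * (i₀ : ℤ)^2) :
    Tendsto (fun n : ℕ =>
        Real.log (((Finset.range (k+1)).lcm
          (fun i : ℕ => a*((n : ℤ)+i)^2 + b*((n : ℤ)+i) + c) : ℤ) : ℝ)
        / Real.log (n : ℝ))
      atTop (nhds ((k : ℝ) + (i₀ : ℝ) + 1)) :=
  log_lcm_asymptotic_general a b c ha k i₀ hi₀ hi₀k hD
end
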